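/- arXiv:2402.15317 — 10 statements merged into one kernel-verified Lean document; each statement's English description precedes it below -/
import Mathlib

section
/- Let E and F be finite sets. A collection R of pairs (I,J) with I ⊆ E, J ⊆ F, |I| = |J| is the set of regular minors of a bimatroid on E × F if and only if the collection {(E \ I) ∪ J : (I,J) ∈ R}, viewed inside the disjoint union E ⊔ F, is the set of bases of a matroid on E ⊔ F in which E itself is a basis. -/
/-- A bimatroid on `E × F`, given by its collection of regular minors
(pairs `(I, J)` with `I ⊆ E`, `J ⊆ F`, `|I| = |J|`), following Kung's axioms. -/
structure Bimatroid (E F : Type*) [DecidableEq E] [DecidableEq F] where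
  Reg : Finset E → Finset F → Prop
  card_eq : ∀ I J, Reg I J → I.card = J.card
  reg_empty : Reg ∅ ∅
  exch_row : ∀ I J I' J', Reg I J → Reg I' J' → ∀ i' ∈ I' \ I,
    (∃ i ∈ I \ I', Reg (insert i' (I.erase i)) J) ∨
    (∃ j' ∈ J' \ J, Reg (insert i' I) (insert j' J))
  exch_col : ∀ I J I' J', Reg I J → Reg I' J' → ∀ j ∈ J \ J',
    (∃ j' ∈ J' \ J, Reg I (insert j' (J.erase j))) ∨
    (∃ i ∈ I \ I', Reg (I.erase i) (J.erase j))
/-- A family of finsets is the family of bases of a matroid iff it is nonempty and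
satisfies the basis exchange axiom. -/
def IsBasisFamily {α : Type*} [DecidableEq α] (B : Finset α → Prop) : Prop :=
  (∃ b, B b) ∧ ∀ ⦃b₁ b₂⦄, B b₁ → B b₂ → ∀ x ∈ b₁ \ b₂,
    ∃ y ∈ b₂ \ b₁, B (insert y (b₁.erase x))


section
variable {E F : Type*} [Fintype E] [Fintype F] [DecidableEq E] [DecidableEq F]

def Phi (I : Finset E) (J : Finset F) : Finset (E ⊕ F) :=
  Iᶜ.image Sum.inl ∪ J.image Sum.inr

lemma Phi_def (I : Finset E) (J : Finset F) :
    Iᶜ.image Sum.inl ∪ J.image Sum.inr = Phi I J := rfl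

@[simp] lemma inl_mem_Phi {I : Finset E} {J : Finset F} {e : E} :
    Sum.inl e ∈ Phi I J ↔ e ∉ I := by simp [Phi]

@[simp] lemma inr_mem_Phi {I : Finset E} {J : Finset F} {f : F} :
    Sum.inr f ∈ Phi I J ↔ f ∈ J := by simp [Phi]

lemma Phi_inj {I I' : Finset E} {J J' : Finset F} (h : Phi I J = Phi I' J') :
    I = I' ∧ J = J' := by
  constructor
  · ext e
    have := Finset.ext_iff.mp h (Sum.inl e)
    simp only [inl_mem_Phi] at this
    tauto
  · ext f
    have := Finset.ext_iff.mp h (Sum.inr f)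
    simpa using this

lemma id1 {I : Finset E} {J : Finset F} {i i' : E} (hne : i ≠ i') :
    Phi (insert i' (I.erase i)) J = insert (Sum.inl i) ((Phi I J).erase (Sum.inl i')) := by
  ext x
  rcases x with e | f
  · by_cases he : e = i <;> simp [he, hne, Finset.mem_insert, Finset.mem_erase] <;> tauto
  · simp

lemma id2 {I : Finset E} {J : Finset F} {i' : E} {j' : F} :
    Phi (insert i' I) (insert j' J) = insert (Sum.inr j') ((Phi I J).erase (Sum.inl i')) := by
  ext x
  rcases x with e | f <;> simp [Finset.mem_insert, Finset.mem_erase] <;> tauto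

lemma id3 {I : Finset E} {J : Finset F} {j j' : F} :
    Phi I (insert j' (J.erase j)) = insert (Sum.inr j') ((Phi I J).erase (Sum.inr j)) := by
  ext x
  rcases x with e | f <;> simp [Finset.mem_insert, Finset.mem_erase] <;> tauto

lemma id4 {I : Finset E} {J : Finset F} {i : E} {j : F} :
    Phi (I.erase i) (J.erase j) = insert (Sum.inl i) ((Phi I J).erase (Sum.inr j)) := by
  ext x
  rcases x with e | f <;> simp [Finset.mem_insert, Finset.mem_erase] <;> tauto

lemma Phi_empty : Phi (∅ : Finset E) (∅ : Finset F) = Finset.univ.image Sum.inl := by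
  simp [Phi]

end

/-- A collection `R` of pairs `(I, J)` with `|I| = |J|` is the set of regular minors of
a bimatroid on `E × F` iff the corresponding collection `{(E \\ I) ∪ J}` inside `E ⊔ F`
is the set of bases of a matroid on `E ⊔ F` in which `E` itself is a basis. -/
theorem bimatroid_iff_extended_matroid (E F : Type*) [Fintype E] [Fintype F]
    [DecidableEq E] [DecidableEq F]
    (R : Finset E → Finset F → Prop) (hcard : ∀ I J, R I J → I.card = J.card) :
    (∃ A : Bimatroid E F, A.Reg = R) ↔
      (IsBasisFamily (fun S : Finset (E ⊕ F) =>
          ∃ I J, R I J ∧ S = Iᶜ.image Sum.inl ∪ J.image Sum.inr) ∧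
        (∃ I J, R I J ∧
          (Finset.univ.image Sum.inl : Finset (E ⊕ F)) =
            Iᶜ.image Sum.inl ∪ J.image Sum.inr)) := by
  simp only [Phi_def]
  constructor
  · rintro ⟨A, rfl⟩
    refine ⟨⟨⟨Phi ∅ ∅, ∅, ∅, A.reg_empty, rfl⟩, ?_⟩, ∅, ∅, A.reg_empty, Phi_empty.symm⟩
    rintro b₁ b₂ ⟨I, J, hIJ, rfl⟩ ⟨I', J', hIJ', rfl⟩ x hx
    rw [Finset.mem_sdiff] at hx
    rcases x with e | f
    · have he1 : e ∉ I := inl_mem_Phi.mp hx.1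
      have he2 : e ∈ I' := by
        by_contra h; exact hx.2 (inl_mem_Phi.mpr h)
      rcases A.exch_row I J I' J' hIJ hIJ' e (Finset.mem_sdiff.mpr ⟨he2, he1⟩) with
        ⟨i, hi, hreg⟩ | ⟨j', hj', hreg⟩
      · rw [Finset.mem_sdiff] at hi
        refine ⟨Sum.inl i, Finset.mem_sdiff.mpr ⟨inl_mem_Phi.mpr hi.2, by simp [hi.1]⟩,
          insert e (I.erase i), J, hreg, ?_⟩
        have hne : i ≠ e := fun h => he1 (by rw [← h]; exact hi.1)
        exact (id1 (I := I) (J := J) hne).symm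
      · rw [Finset.mem_sdiff] at hj'
        refine ⟨Sum.inr j', Finset.mem_sdiff.mpr ⟨inr_mem_Phi.mpr hj'.1, by simp [hj'.2]⟩,
          insert e I, insert j' J, hreg, id2.symm⟩
    · have hf1 : f ∈ J := inr_mem_Phi.mp hx.1
      have hf2 : f ∉ J' := fun h => hx.2 (inr_mem_Phi.mpr h)
      rcases A.exch_col I J I' J' hIJ hIJ' f (Finset.mem_sdiff.mpr ⟨hf1, hf2⟩) with
        ⟨j', hj', hreg⟩ | ⟨i, hi, hreg⟩
      · rw [Finset.mem_sdiff] at hj'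
        refine ⟨Sum.inr j', Finset.mem_sdiff.mpr ⟨inr_mem_Phi.mpr hj'.1, by simp [hj'.2]⟩,
          I, insert j' (J.erase f), hreg, id3.symm⟩
      · rw [Finset.mem_sdiff] at hi
        refine ⟨Sum.inl i, Finset.mem_sdiff.mpr ⟨inl_mem_Phi.mpr hi.2, by simp [hi.1]⟩,
          I.erase i, J.erase f, hreg, id4.symm⟩
  · rintro ⟨⟨-, hexch⟩, I₀, J₀, hR₀, heq₀⟩
    have hreg_empty : R ∅ ∅ := by
      have hJ : J₀ = ∅ := by
        by_contra h
        obtain ⟨f, hf⟩ := Finset.nonempty_iff_ne_empty.mpr h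
        have : Sum.inr f ∈ (Finset.univ.image Sum.inl : Finset (E ⊕ F)) := by
          rw [heq₀]; exact inr_mem_Phi.mpr hf
        simp at this
      have hI : I₀ = ∅ := by
        rw [← Finset.card_eq_zero, hcard I₀ J₀ hR₀, hJ, Finset.card_empty]
      rwa [hI, hJ] at hR₀
    refine ⟨⟨R, hcard, hreg_empty, ?_, ?_⟩, rfl⟩
    · intro I J I' J' hIJ hIJ' i' hi'
      rw [Finset.mem_sdiff] at hi'
      have hx : Sum.inl i' ∈ Phi I J \ Phi I' J' := by
        rw [Finset.mem_sdiff]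
        exact ⟨inl_mem_Phi.mpr hi'.2, by simp [hi'.1]⟩
      obtain ⟨y, hy, I₁, J₁, hreg, heq⟩ := hexch ⟨I, J, hIJ, rfl⟩ ⟨I', J', hIJ', rfl⟩ _ hx
      rw [Finset.mem_sdiff] at hy
      rcases y with i | j'
      · have hi2 : i ∈ I := by
          by_contra h; exact hy.2 (inl_mem_Phi.mpr h)
        have hi1 : i ∉ I' := inl_mem_Phi.mp hy.1
        left
        refine ⟨i, Finset.mem_sdiff.mpr ⟨hi2, hi1⟩, ?_⟩
        have hne : i ≠ i' := fun h => hi'.2 (by rw [← h]; exact hi2)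
        rw [← id1 hne] at heq
        obtain ⟨h1, h2⟩ := Phi_inj heq.symm
        rwa [← h1, ← h2]
      · have hj1 : j' ∈ J' := inr_mem_Phi.mp hy.1
        have hj2 : j' ∉ J := fun h => hy.2 (inr_mem_Phi.mpr h)
        right
        refine ⟨j', Finset.mem_sdiff.mpr ⟨hj1, hj2⟩, ?_⟩
        rw [← id2] at heq
        obtain ⟨h1, h2⟩ := Phi_inj heq.symm
        rwa [← h1, ← h2]
    · intro I J I' J' hIJ hIJ' j hj
      rw [Finset.mem_sdiff] at hj
      have hx : Sum.inr j ∈ Phi I J \ Phi I' J' := by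
        rw [Finset.mem_sdiff]
        exact ⟨inr_mem_Phi.mpr hj.1, by simp [hj.2]⟩
      obtain ⟨y, hy, I₁, J₁, hreg, heq⟩ := hexch ⟨I, J, hIJ, rfl⟩ ⟨I', J', hIJ', rfl⟩ _ hx
      rw [Finset.mem_sdiff] at hy
      rcases y with i | j'
      · have hi2 : i ∈ I := by
          by_contra h; exact hy.2 (inl_mem_Phi.mpr h)
        have hi1 : i ∉ I' := inl_mem_Phi.mp hy.1
        right
        refine ⟨i, Finset.mem_sdiff.mpr ⟨hi2, hi1⟩, ?_⟩
        rw [← id4] at heq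
        obtain ⟨h1, h2⟩ := Phi_inj heq.symm
        rwa [← h1, ← h2]
      · have hj1 : j' ∈ J' := inr_mem_Phi.mp hy.1
        have hj2 : j' ∉ J := fun h => hy.2 (inr_mem_Phi.mpr h)
        left
        refine ⟨j', Finset.mem_sdiff.mpr ⟨hj1, hj2⟩, ?_⟩
        rw [← id3] at heq
        obtain ⟨h1, h2⟩ := Phi_inj heq.symm
        rwa [← h1, ← h2]
end

section
/- Let E and F be finite sets, K a field, and A a matrix in K^{E×F}. Then the set of pairs (I,J) with I ⊆ E, J ⊆ F, |I| = |J|, such that the square submatrix A[I,J] has nonzero determinant, satisfies the bimatroid axioms on E × F. -/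
/-- `(I, J)` is a regular minor of the matrix `A` if the square submatrix `A[I, J]`
has nonzero determinant (with respect to some, equivalently any, bijection `I ≃ J`). -/
def Matrix.IsRegMinor {E F K : Type*} [DecidableEq E] [Field K] (A : Matrix E F K)
    (I : Finset E) (J : Finset F) : Prop :=
  ∃ e : {x // x ∈ I} ≃ {y // y ∈ J},
    (A.submatrix (fun i : {x // x ∈ I} => (i : E)) (fun i : {x // x ∈ I} => (e i : F))).det ≠ 0



namespace MatrixBimatroidAux

set_option linter.unusedSectionVars false

open Finset

variable {E F K : Type*} [Fintype E] [Fintype F] [DecidableEq E] [DecidableEq F] [Field K]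

/-- `d` is a row dependency of rows `I` over columns `J`. -/
def Dep (A : Matrix E F K) (I : Finset E) (J : Finset F) (d : E → K) : Prop :=
  ∀ j ∈ J, ∑ i ∈ I, d i * A i j = 0

/-- The rows `I` are independent over the columns `J`. -/
def Indep (A : Matrix E F K) (I : Finset E) (J : Finset F) : Prop :=
  ∀ d : E → K, Dep A I J d → ∀ i ∈ I, d i = 0

variable (A : Matrix E F K)

lemma sum_mask (I : Finset E) (g : {x // x ∈ I} → K) (f : E → K) :
    ∑ i ∈ I, (if hk : i ∈ I then g ⟨i, hk⟩ else 0) * f i = ∑ i : {x // x ∈ I}, g i * f i := by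
  rw [← Finset.sum_coe_sort I (fun i => (if hk : i ∈ I then g ⟨i, hk⟩ else 0) * f i)]
  exact Finset.sum_congr rfl fun i _ => by simp [i.2]

lemma indep_iff_li (I : Finset E) (J : Finset F) :
    Indep A I J ↔
      LinearIndependent K (fun i : {x // x ∈ I} => fun j : {y // y ∈ J} => A i j) := by
  rw [Fintype.linearIndependent_iff]
  constructor
  · intro h g hg i
    have hd : Dep A I J (fun k => if hk : k ∈ I then g ⟨k, hk⟩ else 0) := by
      intro j hj
      have h1 := congrFun hg ⟨j, hj⟩
      rw [Finset.sum_apply] at h1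
      rw [sum_mask]
      simpa using h1
    have := h _ hd i i.2
    simpa using this
  · intro h d hd i hi
    have hg : ∑ x : {x // x ∈ I}, d x • (fun j : {y // y ∈ J} => A x j) = 0 := by
      funext j
      rw [Finset.sum_apply]
      have := hd j j.2
      rw [← Finset.sum_coe_sort I (fun i => d i * A i j)] at this
      simpa using this
    exact h (fun x => d x) hg ⟨i, hi⟩

lemma not_indep_of_card_lt {I : Finset E} {J : Finset F} (h : J.card < I.card) :
    ¬ Indep A I J := by
  rw [indep_iff_li]
  intro hli
  have h2 := hli.fintype_card_le_finrank
  rw [Module.finrank_pi, Fintype.card_coe, Fintype.card_coe] at h2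
  omega

lemma exists_dep_of_not_indep {I : Finset E} {J : Finset F} (h : ¬ Indep A I J) :
    ∃ d : E → K, Dep A I J d ∧ (∀ k, k ∉ I → d k = 0) ∧ ∃ i ∈ I, d i ≠ 0 := by
  unfold Indep at h
  push_neg at h
  obtain ⟨d, hd, i, hi, hne⟩ := h
  refine ⟨fun k => if k ∈ I then d k else 0, ?_, fun k hk => by simp [hk], i, hi, by simpa [hi]⟩
  intro j hj
  rw [← hd j hj]
  exact Finset.sum_congr rfl fun k hk => by simp [hk]

lemma exists_coeffs {I : Finset E} {J : Finset F} (hInd : Indep A I J) (hc : I.card = J.card)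
    (b : F → K) : ∃ c : E → K, (∀ k, k ∉ I → c k = 0) ∧ ∀ j ∈ J, b j = ∑ i ∈ I, c i * A i j := by
  rcases I.eq_empty_or_nonempty with hI | ⟨i0, hi0⟩
  · subst hI
    have : J = ∅ := by simpa using hc.symm
    subst this
    exact ⟨0, fun k _ => rfl, fun j hj => absurd hj (by simp)⟩
  · have : Nonempty {x // x ∈ I} := ⟨⟨i0, hi0⟩⟩
    rw [indep_iff_li] at hInd
    have hcard : Fintype.card {x // x ∈ I} = Module.finrank K ({y // y ∈ J} → K) := by
      rw [Module.finrank_pi, Fintype.card_coe, Fintype.card_coe, hc]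
    let bas := basisOfLinearIndependentOfCardEqFinrank hInd hcard
    have hbas : ⇑bas = fun i : {x // x ∈ I} => fun j : {y // y ∈ J} => A i j :=
      coe_basisOfLinearIndependentOfCardEqFinrank hInd hcard
    set x : {y // y ∈ J} → K := fun j => b j with hxdef
    have hx := bas.sum_repr x
    refine ⟨fun k => if hk : k ∈ I then bas.repr x ⟨k, hk⟩ else 0,
      fun k hk => by simp [hk], ?_⟩
    intro j hj
    have h1 := congrFun hx ⟨j, hj⟩
    rw [Finset.sum_apply] at h1
    rw [sum_mask]
    rw [show b j = x ⟨j, hj⟩ from rfl, ← h1]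
    exact Finset.sum_congr rfl fun i _ => by simp [hbas]

lemma isRegMinor_iff (I : Finset E) (J : Finset F) :
    A.IsRegMinor I J ↔ I.card = J.card ∧ Indep A I J := by
  constructor
  · rintro ⟨e, he⟩
    have hcard : I.card = J.card := by
      rw [← Fintype.card_coe, ← Fintype.card_coe]
      exact Fintype.card_congr e
    refine ⟨hcard, ?_⟩
    rw [indep_iff_li]
    have hu : IsUnit (A.submatrix (fun i : {x // x ∈ I} => (i : E))
        (fun i : {x // x ∈ I} => (e i : F))) := by
      rwa [Matrix.isUnit_iff_isUnit_det, isUnit_iff_ne_zero]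
    have hli := Matrix.linearIndependent_rows_iff_isUnit.2 hu
    refine LinearIndependent.of_comp
      ((LinearEquiv.funCongrLeft K K e : ({y // y ∈ J} → K) ≃ₗ[K] ({x // x ∈ I} → K))
        : ({y // y ∈ J} → K) →ₗ[K] ({x // x ∈ I} → K)) ?_
    exact hli
  · rintro ⟨hc, hInd⟩
    have e : {x // x ∈ I} ≃ {y // y ∈ J} :=
      Fintype.equivOfCardEq (by rw [Fintype.card_coe, Fintype.card_coe]; exact hc)
    refine ⟨e, ?_⟩
    rw [indep_iff_li] at hInd
    rw [← isUnit_iff_ne_zero, ← Matrix.isUnit_iff_isUnit_det,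
      ← Matrix.linearIndependent_rows_iff_isUnit]
    exact hInd.map' (LinearEquiv.funCongrLeft K K e).toLinearMap
      (LinearEquiv.funCongrLeft K K e).ker

lemma sum_of_supp (I I' : Finset E) (g : E → K)
    (h1 : ∀ k ∈ I, k ∉ I' → g k = 0) (h2 : ∀ k, k ∉ I → g k = 0) :
    ∑ k ∈ I', g k = ∑ k ∈ I, g k := by
  rw [← Finset.sum_subset (Finset.inter_subset_right : I ∩ I' ⊆ I')
      (fun k hk hk2 => h2 k (fun h => hk2 (Finset.mem_inter.mpr ⟨h, hk⟩))),
    ← Finset.sum_subset (Finset.inter_subset_left : I ∩ I' ⊆ I)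
      (fun k hk hk2 => h1 k hk (fun h => hk2 (Finset.mem_inter.mpr ⟨hk, h⟩)))]

lemma exch_row_aux {I I' : Finset E} {J J' : Finset F}
    (hIJ : Indep A I J) (hc : I.card = J.card) (hI'J' : Indep A I' J')
    {i' : E} (hi'1 : i' ∈ I') (hi'2 : i' ∉ I) :
    (∃ i ∈ I \ I', Indep A (insert i' (I.erase i)) J) ∨
    (∃ j' ∈ J' \ J, Indep A (insert i' I) (insert j' J)) := by
  obtain ⟨c, hc0, hcc⟩ := exists_coeffs A hIJ hc (A i')
  by_cases hcase : ∃ i ∈ I \ I', c i ≠ 0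
  · obtain ⟨i, himem, hci⟩ := hcase
    have hiI : i ∈ I := (Finset.mem_sdiff.mp himem).1
    left
    refine ⟨i, himem, ?_⟩
    intro d hd
    have hdep : Dep A I J (fun k => d i' * c k + (if k = i then 0 else d k)) := by
      intro j hj
      have h1 := hd j hj
      rw [Finset.sum_insert (fun hmem => hi'2 (Finset.mem_of_mem_erase hmem))] at h1
      have h2 := hcc j hj
      have e1 : ∑ k ∈ I, (d i' * c k + (if k = i then 0 else d k)) * A k j
          = d i' * ∑ k ∈ I, c k * A k j + ∑ k ∈ I, (if k = i then 0 else d k) * A k j := by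
        rw [Finset.mul_sum, ← Finset.sum_add_distrib]
        exact Finset.sum_congr rfl fun k _ => by ring
      have e2 : ∑ k ∈ I, (if k = i then 0 else d k) * A k j
          = ∑ k ∈ I.erase i, d k * A k j := by
        rw [← Finset.sum_erase_add I _ hiI, if_pos rfl, zero_mul, add_zero]
        exact Finset.sum_congr rfl fun m hm => by
          rw [if_neg (Finset.ne_of_mem_erase hm)]
      rw [e1, e2, ← h2]
      linear_combination h1
    have he0 := hIJ _ hdep
    have hdi' : d i' = 0 := by
      have h3 := he0 i hiI
      rw [if_pos rfl, add_zero] at h3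
      rcases mul_eq_zero.mp h3 with h | h
      · exact h
      · exact absurd h hci
    intro k hk
    rcases Finset.mem_insert.mp hk with rfl | hk'
    · exact hdi'
    · have h4 := he0 k (Finset.mem_of_mem_erase hk')
      rw [if_neg (Finset.ne_of_mem_erase hk'), hdi', zero_mul, zero_add] at h4
      exact h4
  · push_neg at hcase
    have hj' : ∃ j' ∈ J', A i' j' ≠ ∑ i ∈ I, c i * A i j' := by
      by_contra hall
      push_neg at hall
      have hdep : Dep A I' J' (fun k => c k - (if k = i' then 1 else 0)) := by
        intro j' hj'
        have hsum : ∑ k ∈ I', c k * A k j' = ∑ k ∈ I, c k * A k j' :=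
          sum_of_supp I I' _
            (fun k hk1 hk2 => by
              rw [hcase k (Finset.mem_sdiff.mpr ⟨hk1, hk2⟩), zero_mul])
            (fun k hk => by rw [hc0 k hk, zero_mul])
        have hione : ∑ k ∈ I', (if k = i' then (1:K) else 0) * A k j' = A i' j' := by
          rw [Finset.sum_eq_single_of_mem i' hi'1
            (fun b _ hb => by rw [if_neg hb, zero_mul]), if_pos rfl, one_mul]
        have e1 : ∑ k ∈ I', (c k - (if k = i' then 1 else 0)) * A k j'
            = ∑ k ∈ I', c k * A k j' - ∑ k ∈ I', (if k = i' then (1:K) else 0) * A k j' := by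
          rw [← Finset.sum_sub_distrib]
          exact Finset.sum_congr rfl fun k _ => by ring
        rw [e1, hione, hsum, ← hall j' hj', sub_self]
      have h5 := hI'J' _ hdep i' hi'1
      rw [if_pos rfl, hc0 i' hi'2] at h5
      rw [zero_sub] at h5
      exact one_ne_zero (neg_eq_zero.mp h5)
    obtain ⟨j', hj'J', hne⟩ := hj'
    have hj'J : j' ∉ J := fun h => hne (hcc j' h)
    right
    refine ⟨j', Finset.mem_sdiff.mpr ⟨hj'J', hj'J⟩, ?_⟩
    intro d hd
    have hdep : Dep A I J (fun k => d k + d i' * c k) := by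
      intro j hj
      have h1 := hd j (Finset.mem_insert_of_mem hj)
      rw [Finset.sum_insert hi'2] at h1
      have h2 := hcc j hj
      have e1 : ∑ k ∈ I, (d k + d i' * c k) * A k j
          = ∑ k ∈ I, d k * A k j + d i' * ∑ k ∈ I, c k * A k j := by
        rw [Finset.mul_sum, ← Finset.sum_add_distrib]
        exact Finset.sum_congr rfl fun k _ => by ring
      rw [e1, ← h2]
      linear_combination h1
    have he0 := hIJ _ hdep
    have hdi' : d i' = 0 := by
      have h3 := hd j' (Finset.mem_insert_self j' J)
      rw [Finset.sum_insert hi'2] at h3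
      have h4 : ∑ k ∈ I, d k * A k j' = -(d i' * ∑ k ∈ I, c k * A k j') := by
        rw [Finset.mul_sum, ← Finset.sum_neg_distrib]
        exact Finset.sum_congr rfl fun k hk => by
          linear_combination (A k j') * (he0 k hk)
      have h5 : d i' * (A i' j' - ∑ k ∈ I, c k * A k j') = 0 := by
        rw [h4] at h3
        linear_combination h3
      rcases mul_eq_zero.mp h5 with h | h
      · exact h
      · exact absurd (sub_eq_zero.mp h) hne
    intro k hk
    rcases Finset.mem_insert.mp hk with rfl | hkI
    · exact hdi'
    · have h6 := he0 k hkI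
      rw [hdi', zero_mul, add_zero] at h6
      exact h6

lemma exch_col_aux {I I' : Finset E} {J J' : Finset F}
    (hIJ : Indep A I J) (hc : I.card = J.card) (hI'J' : Indep A I' J')
    {j : F} (hjJ : j ∈ J) (hjJ' : j ∉ J') :
    (∃ j' ∈ J' \ J, Indep A I (insert j' (J.erase j))) ∨
    (∃ i ∈ I \ I', Indep A (I.erase i) (J.erase j)) := by
  by_contra hcon
  push_neg at hcon
  obtain ⟨h1, h2⟩ := hcon
  have hlt : (J.erase j).card < I.card := by
    rw [Finset.card_erase_of_mem hjJ, hc]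
    have := Finset.card_pos.mpr ⟨j, hjJ⟩
    omega
  obtain ⟨d, hdDep, hdsupp, i0, hi0, hd0⟩ :=
    exists_dep_of_not_indep A (not_indep_of_card_lt A hlt)
  have hu : ∑ i ∈ I, d i * A i j ≠ 0 := by
    intro h
    refine hd0 (hIJ d ?_ i0 hi0)
    intro jj hjj
    by_cases hjjj : jj = j
    · subst hjjj; exact h
    · exact hdDep jj (Finset.mem_erase.mpr ⟨hjjj, hjj⟩)
  have hC : ∀ i ∈ I, d i ≠ 0 → Indep A (I.erase i) (J.erase j) := by
    intro i hiI hdi d' hd' k hk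
    have hu'd : ∀ jj, ∑ m ∈ I, (if m = i then 0 else d' m) * A m jj
        = ∑ m ∈ I.erase i, d' m * A m jj := by
      intro jj
      rw [← Finset.sum_erase_add I _ hiI, if_pos rfl, zero_mul, add_zero]
      exact Finset.sum_congr rfl fun m hm => by
        rw [if_neg (Finset.ne_of_mem_erase hm)]
    have hDdep : Dep A I J (fun m =>
        (∑ n ∈ I, d n * A n j) * (if m = i then 0 else d' m)
          - (∑ n ∈ I.erase i, d' n * A n j) * d m) := by
      intro jj hjj
      have e1 : ∑ m ∈ I, ((∑ n ∈ I, d n * A n j) * (if m = i then 0 else d' m)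
            - (∑ n ∈ I.erase i, d' n * A n j) * d m) * A m jj
          = (∑ n ∈ I, d n * A n j) * (∑ m ∈ I.erase i, d' m * A m jj)
            - (∑ n ∈ I.erase i, d' n * A n j) * ∑ m ∈ I, d m * A m jj := by
        rw [← hu'd jj, Finset.mul_sum, Finset.mul_sum, ← Finset.sum_sub_distrib]
        exact Finset.sum_congr rfl fun m _ => by ring
      rw [e1]
      by_cases hjjj : jj = j
      · subst hjjj; ring
      · rw [hd' jj (Finset.mem_erase.mpr ⟨hjjj, hjj⟩),
          hdDep jj (Finset.mem_erase.mpr ⟨hjjj, hjj⟩)]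
        ring
    have hD0 := hIJ _ hDdep
    have hu'0 : ∑ n ∈ I.erase i, d' n * A n j = 0 := by
      have h5 := hD0 i hiI
      rw [if_pos rfl, mul_zero, zero_sub, neg_eq_zero] at h5
      rcases mul_eq_zero.mp h5 with h | h
      · exact h
      · exact absurd h hdi
    have h6 := hD0 k (Finset.mem_of_mem_erase hk)
    rw [hu'0, zero_mul, sub_zero, if_neg (Finset.ne_of_mem_erase hk)] at h6
    rcases mul_eq_zero.mp h6 with h | h
    · exact absurd h hu
    · exact h
  have hD : ∀ i ∈ I, i ∉ I' → d i = 0 := by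
    intro i hiI hiI'
    by_contra hne
    exact h2 i (Finset.mem_sdiff.mpr ⟨hiI, hiI'⟩) (hC i hiI hne)
  have hE : ∀ j' ∈ J', ∑ i ∈ I, d i * A i j' = 0 := by
    intro j' hj'
    by_cases hj'J : j' ∈ J
    · exact hdDep j' (Finset.mem_erase.mpr ⟨fun h => hjJ' (h ▸ hj'), hj'J⟩)
    · have hni := h1 j' (Finset.mem_sdiff.mpr ⟨hj', hj'J⟩)
      obtain ⟨δ, hδDep, hδsupp, k0, hk0, hδk0⟩ := exists_dep_of_not_indep A hni
      have hδJ : Dep A I (J.erase j) δ :=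
        fun jj hjj => hδDep jj (Finset.mem_insert_of_mem hjj)
      have hprop : ∀ m ∈ I, d i0 * δ m = δ i0 * d m := by
        intro m hm
        by_cases hmi0 : m = i0
        · subst hmi0; ring
        · have hind := hC i0 hi0 hd0
          have hdep' : Dep A (I.erase i0) (J.erase j)
              (fun m => d i0 * δ m - δ i0 * d m) := by
            intro jj hjj
            have hfull : ∑ m ∈ I, (d i0 * δ m - δ i0 * d m) * A m jj = 0 := by
              have expand : ∑ m ∈ I, (d i0 * δ m - δ i0 * d m) * A m jj
                  = d i0 * ∑ m ∈ I, δ m * A m jj - δ i0 * ∑ m ∈ I, d m * A m jj := by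
                rw [Finset.mul_sum, Finset.mul_sum, ← Finset.sum_sub_distrib]
                exact Finset.sum_congr rfl fun m _ => by ring
              rw [expand, hδJ jj hjj, hdDep jj hjj]
              ring
            rw [← Finset.sum_erase_add I _ hi0] at hfull
            linear_combination hfull
          have hz := hind _ hdep' m (Finset.mem_erase.mpr ⟨hmi0, hm⟩)
          linear_combination hz
      have hδi0 : δ i0 ≠ 0 := by
        intro h0
        apply hδk0
        have hpk := hprop k0 hk0
        rw [h0, zero_mul] at hpk
        rcases mul_eq_zero.mp hpk with h | h
        · exact absurd h hd0
        · exact h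
      have hδj' := hδDep j' (Finset.mem_insert_self j' (J.erase j))
      have hmult : δ i0 * ∑ i ∈ I, d i * A i j' = 0 := by
        have hx : ∑ m ∈ I, d i0 * (δ m * A m j') = ∑ m ∈ I, δ i0 * (d m * A m j') :=
          Finset.sum_congr rfl fun m hm => by
            linear_combination (A m j') * hprop m hm
        calc δ i0 * ∑ i ∈ I, d i * A i j'
            = ∑ m ∈ I, δ i0 * (d m * A m j') := by rw [Finset.mul_sum]
          _ = ∑ m ∈ I, d i0 * (δ m * A m j') := hx.symm
          _ = d i0 * ∑ m ∈ I, δ m * A m j' := by rw [Finset.mul_sum]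
          _ = 0 := by rw [hδj', mul_zero]
      rcases mul_eq_zero.mp hmult with h | h
      · exact absurd h hδi0
      · exact h
  have hF : Dep A I' J' d := by
    intro j' hj'
    rw [sum_of_supp I I' (fun k => d k * A k j')
      (fun k hk1 hk2 => by simp only [hD k hk1 hk2, zero_mul])
      (fun k hk => by simp only [hdsupp k hk, zero_mul])]
    exact hE j' hj'
  have hfin : d i0 = 0 := by
    by_cases hi0I' : i0 ∈ I'
    · exact hI'J' d hF i0 hi0I'
    · exact hD i0 hi0 hi0I'
  exact hd0 hfin

end MatrixBimatroidAux


/-- The regular minors of a matrix `A ∈ K^{E × F}` satisfy the bimatroid axioms. -/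
theorem matrix_regMinors_bimatroid {E F K : Type*} [Fintype E] [Fintype F]
    [DecidableEq E] [DecidableEq F] [Field K] (A : Matrix E F K) :
    ∃ B : Bimatroid E F, ∀ I J, B.Reg I J ↔ A.IsRegMinor I J := by
  refine ⟨⟨A.IsRegMinor, ?_, ?_, ?_, ?_⟩, fun I J => Iff.rfl⟩
  · intro I J h
    exact ((MatrixBimatroidAux.isRegMinor_iff A I J).1 h).1
  · rw [MatrixBimatroidAux.isRegMinor_iff]
    exact ⟨rfl, fun d _ i hi => absurd hi (Finset.notMem_empty i)⟩
  · intro I J I' J' hIJ hI'J' i' hi'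
    rw [MatrixBimatroidAux.isRegMinor_iff] at hIJ hI'J'
    obtain ⟨hc, hInd⟩ := hIJ
    obtain ⟨hc', hInd'⟩ := hI'J'
    rw [Finset.mem_sdiff] at hi'
    rcases MatrixBimatroidAux.exch_row_aux A hInd hc hInd' hi'.1 hi'.2 with
      ⟨i, hi, h⟩ | ⟨j', hj', h⟩
    · left
      refine ⟨i, hi, ?_⟩
      rw [MatrixBimatroidAux.isRegMinor_iff]
      refine ⟨?_, h⟩
      rw [Finset.mem_sdiff] at hi
      rw [Finset.card_insert_of_notMem (fun hmem => hi'.2 (Finset.mem_of_mem_erase hmem)),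
        Finset.card_erase_of_mem hi.1]
      have : 0 < I.card := Finset.card_pos.mpr ⟨i, hi.1⟩
      omega
    · right
      refine ⟨j', hj', ?_⟩
      rw [MatrixBimatroidAux.isRegMinor_iff]
      rw [Finset.mem_sdiff] at hj'
      refine ⟨?_, h⟩
      rw [Finset.card_insert_of_notMem hi'.2, Finset.card_insert_of_notMem hj'.2, hc]
  · intro I J I' J' hIJ hI'J' j hj
    rw [MatrixBimatroidAux.isRegMinor_iff] at hIJ hI'J'
    obtain ⟨hc, hInd⟩ := hIJ
    obtain ⟨hc', hInd'⟩ := hI'J'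
    rw [Finset.mem_sdiff] at hj
    rcases MatrixBimatroidAux.exch_col_aux A hInd hc hInd' hj.1 hj.2 with
      ⟨j', hj', h⟩ | ⟨i, hi, h⟩
    · left
      refine ⟨j', hj', ?_⟩
      rw [MatrixBimatroidAux.isRegMinor_iff]
      refine ⟨?_, h⟩
      rw [Finset.mem_sdiff] at hj'
      rw [Finset.card_insert_of_notMem (fun hmem => hj'.2 (Finset.mem_of_mem_erase hmem)),
        Finset.card_erase_of_mem hj.1, hc]
      have : 0 < J.card := Finset.card_pos.mpr ⟨j, hj.1⟩
      omega
    · right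
      refine ⟨i, hi, ?_⟩
      rw [MatrixBimatroidAux.isRegMinor_iff]
      refine ⟨?_, h⟩
      rw [Finset.mem_sdiff] at hi
      rw [Finset.card_erase_of_mem hi.1, Finset.card_erase_of_mem hj.1, hc]
end

section
/- Let A be a bimatroid on E × F with extended matroid Â on E ⊔ F (whose bases correspond to regular minors (I,J) via (E\I) ∪ J). Define the relative rank r(S,T) for S ⊆ E, T ⊆ F as the largest d such that there is a regular d×d minor (I,J) with I ⊆ S and J ⊆ T. Then r(S,T) = r̂((E\S) ∪ T) − |E \ S|, where r̂ is the rank function of the matroid Â. -/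
/-- The relative rank of a bimatroid: the largest `d` such that there is a regular
`d × d` minor `(I, J)` with `I ⊆ S` and `J ⊆ T`. -/
noncomputable def Bimatroid.relRank {E F : Type*} [DecidableEq E] [DecidableEq F]
    (A : Bimatroid E F) (S : Finset E) (T : Finset F) : ℕ :=
  sSup {d | ∃ I J, A.Reg I J ∧ I ⊆ S ∧ J ⊆ T ∧ I.card = d}

/-- The rank function of the extended matroid `Â` on `E ⊔ F`, whose bases are the
sets `(E \ I) ∪ J` for regular minors `(I, J)`: the rank of `X` is the maximal size
of the intersection of `X` with a basis. -/
noncomputable def Bimatroid.extRank {E F : Type*} [Fintype E] [Fintype F]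
    [DecidableEq E] [DecidableEq F] (A : Bimatroid E F) (X : Finset (E ⊕ F)) : ℕ :=
  sSup {n | ∃ I J, A.Reg I J ∧ n = ((Iᶜ.image Sum.inl ∪ J.image Sum.inr) ∩ X).card}

section Aux

variable {E F : Type*} [DecidableEq E] [DecidableEq F]

/-- Any column of a regular minor can be deleted (together with some row). -/
lemma Bimatroid.delete_col (A : Bimatroid E F) {I : Finset E} {J : Finset F}
    (h : A.Reg I J) {j : F} (hj : j ∈ J) :
    ∃ i ∈ I, A.Reg (I.erase i) (J.erase j) := by
  rcases A.exch_col I J ∅ ∅ h A.reg_empty j (by simp [hj]) with ⟨j', hj', _⟩ | ⟨i, hi, h'⟩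
  · simp at hj'
  · exact ⟨i, by simpa using hi, h'⟩

/-- Any row of a regular minor can be deleted (together with some column). -/
lemma Bimatroid.delete_row (A : Bimatroid E F) :
    ∀ n (I : Finset E) (J : Finset F), I.card ≤ n → A.Reg I J →
      ∀ i ∈ I, ∃ j ∈ J, A.Reg (I.erase i) (J.erase j) := by
  intro n
  induction n with
  | zero =>
    intro I J hn _ i hi
    rw [Nat.le_zero, Finset.card_eq_zero] at hn
    simp [hn] at hi
  | succ n ih =>
    intro I J hn h i hi
    have hJne : J.Nonempty := by
      rw [← Finset.card_pos, ← A.card_eq I J h, Finset.card_pos]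
      exact ⟨i, hi⟩
    obtain ⟨j₀, hj₀⟩ := hJne
    obtain ⟨i₁, hi₁, h₁⟩ := A.delete_col h hj₀
    by_cases hii : i₁ = i
    · exact ⟨j₀, hj₀, hii ▸ h₁⟩
    · have hi' : i ∈ I.erase i₁ := Finset.mem_erase.mpr ⟨fun e => hii e.symm, hi⟩
      have hcard : (I.erase i₁).card ≤ n := by
        have := Finset.card_erase_of_mem hi₁
        omega
      obtain ⟨j₁, hj₁, h₂⟩ := ih (I.erase i₁) (J.erase j₀) hcard h₁ i hi'
      have hj₁J : j₁ ∈ J := Finset.mem_of_mem_erase hj₁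
      have hj₁ne : j₁ ≠ j₀ := (Finset.mem_erase.mp hj₁).1
      have hmem : i₁ ∈ I \ ((I.erase i₁).erase i) := by
        simp [Finset.mem_sdiff, Finset.mem_erase, hi₁]
      rcases A.exch_row ((I.erase i₁).erase i) ((J.erase j₀).erase j₁) I J h₂ h i₁ hmem
        with ⟨i₂, hi₂, _⟩ | ⟨j', hj', h₃⟩
      · rw [Finset.mem_sdiff, Finset.mem_erase, Finset.mem_erase] at hi₂
        exact absurd hi₂.1.2.2 hi₂.2
      · have hIeq : insert i₁ ((I.erase i₁).erase i) = I.erase i := by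
          rw [Finset.erase_right_comm, Finset.insert_erase
            (Finset.mem_erase.mpr ⟨hii, hi₁⟩)]
        rw [hIeq] at h₃
        have hj'' : j' = j₀ ∨ j' = j₁ := by
          rw [Finset.mem_sdiff, Finset.mem_erase, Finset.mem_erase] at hj'
          rcases hj' with ⟨hj'J, hne⟩
          by_contra hc
          push_neg at hc
          exact hne ⟨hc.2, hc.1, hj'J⟩
        rcases hj'' with rfl | rfl
        · have hJeq : insert j' ((J.erase j').erase j₁) = J.erase j₁ := by
            rw [Finset.erase_right_comm, Finset.insert_erase
              (Finset.mem_erase.mpr ⟨fun e => hj₁ne e.symm, hj₀⟩)]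
          rw [hJeq] at h₃
          exact ⟨j₁, hj₁J, h₃⟩
        · have hJeq : insert j' ((J.erase j₀).erase j') = J.erase j₀ := by
            rw [Finset.insert_erase hj₁]
          rw [hJeq] at h₃
          exact ⟨j₀, hj₀, h₃⟩

lemma Bimatroid.le_relRank (A : Bimatroid E F) {S I : Finset E} {T J : Finset F}
    (h : A.Reg I J) (hI : I ⊆ S) (hJ : J ⊆ T) : I.card ≤ A.relRank S T := by
  apply le_csSup
  · exact ⟨S.card, fun d hd => by
      obtain ⟨I', J', _, hI', _, rfl⟩ := hd
      exact Finset.card_le_card hI'⟩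
  · exact ⟨I, J, h, hI, hJ, rfl⟩

/-- Key inequality: any regular minor certifies at most the relative rank. -/
lemma Bimatroid.key (A : Bimatroid E F) (S : Finset E) (T : Finset F) :
    ∀ n (I : Finset E) (J : Finset F), (I \ S).card + (J \ T).card ≤ n → A.Reg I J →
      (J ∩ T).card ≤ A.relRank S T + (I \ S).card := by
  intro n
  induction n with
  | zero =>
    intro I J hn h
    have hI : I \ S = ∅ := Finset.card_eq_zero.mp (by omega)
    have hJ : J \ T = ∅ := Finset.card_eq_zero.mp (by omega)
    rw [Finset.sdiff_eq_empty_iff_subset] at hI hJ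
    rw [Finset.inter_eq_left.mpr hJ, ← A.card_eq I J h]
    exact le_add_of_le_of_nonneg (A.le_relRank h hI hJ) (Nat.zero_le _)
  | succ n ih =>
    intro I J hn h
    by_cases hJT : J \ T = ∅
    · by_cases hIS : I \ S = ∅
      · rw [Finset.sdiff_eq_empty_iff_subset] at hJT hIS
        rw [Finset.inter_eq_left.mpr hJT, ← A.card_eq I J h]
        exact le_add_of_le_of_nonneg (A.le_relRank h hIS hJT) (Nat.zero_le _)
      · obtain ⟨i, hiIS⟩ := Finset.nonempty_iff_ne_empty.mpr hIS
        have hiI : i ∈ I := (Finset.mem_sdiff.mp hiIS).1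
        obtain ⟨j, hjJ, h'⟩ := A.delete_row I.card I J le_rfl h i hiI
        have e1 : (I.erase i) \ S = (I \ S).erase i := by
          ext x; simp only [Finset.mem_sdiff, Finset.mem_erase]; tauto
        have hc1 : ((I.erase i) \ S).card = (I \ S).card - 1 := by
          rw [e1, Finset.card_erase_of_mem hiIS]
        have hc2 : ((J.erase j) \ T).card ≤ (J \ T).card :=
          Finset.card_le_card (Finset.sdiff_subset_sdiff (Finset.erase_subset j J) le_rfl)
        have hIS1 : 1 ≤ (I \ S).card := Finset.card_pos.mpr ⟨i, hiIS⟩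
        have hrec := ih (I.erase i) (J.erase j) (by omega) h'
        have hsub : J ∩ T ⊆ insert j ((J.erase j) ∩ T) := by
          intro x hx
          rw [Finset.mem_inter] at hx
          by_cases hxj : x = j
          · exact Finset.mem_insert.mpr (Or.inl hxj)
          · exact Finset.mem_insert.mpr (Or.inr (Finset.mem_inter.mpr
              ⟨Finset.mem_erase.mpr ⟨hxj, hx.1⟩, hx.2⟩))
        have := Finset.card_le_card hsub
        have := Finset.card_insert_le j ((J.erase j) ∩ T)
        omega
    · obtain ⟨j, hjJT⟩ := Finset.nonempty_iff_ne_empty.mpr hJT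
      rw [Finset.mem_sdiff] at hjJT
      obtain ⟨i, hiI, h'⟩ := A.delete_col h hjJT.1
      have e2 : (J.erase j) ∩ T = J ∩ T := by
        ext x
        simp only [Finset.mem_inter, Finset.mem_erase]
        constructor
        · rintro ⟨⟨_, hx⟩, hxT⟩; exact ⟨hx, hxT⟩
        · rintro ⟨hxJ, hxT⟩
          exact ⟨⟨fun e => hjJT.2 (e ▸ hxT), hxJ⟩, hxT⟩
      have hc1 : ((I.erase i) \ S).card ≤ (I \ S).card :=
        Finset.card_le_card (Finset.sdiff_subset_sdiff (Finset.erase_subset i I) le_rfl)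
      have hc2 : ((J.erase j) \ T).card = (J \ T).card - 1 := by
        have e5 : (J.erase j) \ T = (J \ T).erase j := by
          ext x; simp only [Finset.mem_sdiff, Finset.mem_erase]; tauto
        rw [e5, Finset.card_erase_of_mem (Finset.mem_sdiff.mpr hjJT)]
      have hJT1 : 1 ≤ (J \ T).card := Finset.card_pos.mpr ⟨j, Finset.mem_sdiff.mpr hjJT⟩
      have hrec := ih (I.erase i) (J.erase j) (by omega) h'
      rw [e2] at hrec
      omega

end Aux

section Card

variable {E F : Type*} [Fintype E] [Fintype F] [DecidableEq E] [DecidableEq F]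

lemma sum_inter_card (A C : Finset E) (B D : Finset F) :
    ((A.image Sum.inl ∪ B.image Sum.inr) ∩ (C.image Sum.inl ∪ D.image Sum.inr) :
      Finset (E ⊕ F)).card = (A ∩ C).card + (B ∩ D).card := by
  have heq : ((A.image Sum.inl ∪ B.image Sum.inr) ∩ (C.image Sum.inl ∪ D.image Sum.inr) :
      Finset (E ⊕ F)) = (A ∩ C).image Sum.inl ∪ (B ∩ D).image Sum.inr := by
    ext x
    cases x <;> simp
  rw [heq, Finset.card_union_of_disjoint (by
      simp [Finset.disjoint_left]),
    Finset.card_image_of_injective _ Sum.inl_injective,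
    Finset.card_image_of_injective _ Sum.inr_injective]

end Card

/-- The relative rank of a bimatroid satisfies `r(S, T) = r̂((E \ S) ∪ T) − |E \ S|`,
where `r̂` is the rank function of the extended matroid. -/
theorem relRank_eq_extRank {E F : Type*} [Fintype E] [Fintype F]
    [DecidableEq E] [DecidableEq F] (A : Bimatroid E F)
    (S : Finset E) (T : Finset F) :
    A.relRank S T + Sᶜ.card = A.extRank (Sᶜ.image Sum.inl ∪ T.image Sum.inr) := by
  have hbddExt : BddAbove {n | ∃ I J, A.Reg I J ∧
      n = ((Iᶜ.image Sum.inl ∪ J.image Sum.inr) ∩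
        (Sᶜ.image Sum.inl ∪ T.image Sum.inr)).card} := by
    refine ⟨(Sᶜ.image Sum.inl ∪ T.image Sum.inr).card, ?_⟩
    rintro n ⟨I, J, _, rfl⟩
    exact Finset.card_le_card (Finset.inter_subset_right)
  apply le_antisymm
  · -- relRank + |Sᶜ| ≤ extRank
    have hne : {d | ∃ I J, A.Reg I J ∧ I ⊆ S ∧ J ⊆ T ∧ I.card = d}.Nonempty :=
      ⟨0, ∅, ∅, A.reg_empty, Finset.empty_subset _, Finset.empty_subset _, Finset.card_empty⟩
    have hbdd : BddAbove {d | ∃ I J, A.Reg I J ∧ I ⊆ S ∧ J ⊆ T ∧ I.card = d} :=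
      ⟨S.card, fun d hd => by
        obtain ⟨I', J', _, hI', _, rfl⟩ := hd
        exact Finset.card_le_card hI'⟩
    obtain ⟨I, J, h, hI, hJ, hcard⟩ := Nat.sSup_mem hne hbdd
    apply le_csSup hbddExt
    refine ⟨I, J, h, ?_⟩
    rw [sum_inter_card]
    have e1 : Iᶜ ∩ Sᶜ = Sᶜ := Finset.inter_eq_right.mpr (Finset.compl_subset_compl.mpr hI)
    have e2 : J ∩ T = J := Finset.inter_eq_left.mpr hJ
    rw [e1, e2, ← A.card_eq I J h, hcard]
    exact (add_comm _ _)
  · -- extRank ≤ relRank + |Sᶜ|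
    apply csSup_le
    · exact ⟨_, ∅, ∅, A.reg_empty, rfl⟩
    · rintro n ⟨I, J, h, rfl⟩
      rw [sum_inter_card]
      have hkey := A.key S T ((I \ S).card + (J \ T).card) I J le_rfl h
      have hpart : (Sᶜ ∩ I).card + (Sᶜ \ I).card = Sᶜ.card :=
        Finset.card_inter_add_card_sdiff Sᶜ I
      have e3 : Sᶜ \ I = Iᶜ ∩ Sᶜ := by
        ext x
        simp only [Finset.mem_sdiff, Finset.mem_inter, Finset.mem_compl]
        tauto
      have e4 : Sᶜ ∩ I = I \ S := by
        ext x
        simp only [Finset.mem_sdiff, Finset.mem_inter, Finset.mem_compl]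
        tauto
      rw [e3, e4] at hpart
      omega
end

section
/- Let E and F be finite sets and r : 2^E × 2^F → ℤ_{≥0} a function. Then r is the relative rank function of a bimatroid on E × F if and only if: (1) r(S,T) ≤ min(|S|,|T|) for all S,T; (2) r(S,T) ≤ r(S ∪ {e}, T) ≤ r(S,T)+1 and r(S,T) ≤ r(S, T ∪ {f}) ≤ r(S,T)+1 for all S ⊆ E, T ⊆ F, e ∈ E, f ∈ F; (3) r(S,T) + r(S',T') ≥ r(S ∪ S', T ∩ T') + r(S ∩ S', T ∪ T') for all S,S' ⊆ E and T,T' ⊆ F. -/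
set_option linter.unusedSectionVars false

open Finset

namespace BMaux

variable {G : Type*} [DecidableEq G] [Fintype G]

/-- Finset basis-exchange property. -/
def Exch (Base : Finset G → Prop) : Prop :=
  ∀ ⦃B B'⦄, Base B → Base B' → ∀ b ∈ B \ B', ∃ b' ∈ B' \ B, Base (insert b' (B.erase b))

variable {Base : Finset G → Prop}

theorem equicard (hx : Exch Base) :
    ∀ B B', Base B → Base B' → B.card = B'.card := by
  suffices h : ∀ n B B', (B \ B').card = n → Base B → Base B' → B.card = B'.card by
    intro B B' hB hB'; exact h _ B B' rfl hB hB'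
  intro n
  induction n with
  | zero =>
    intro B B' hcd hB hB'
    have hsub : B ⊆ B' := by
      rw [← Finset.sdiff_eq_empty_iff_subset]; exact Finset.card_eq_zero.mp hcd
    rcases Finset.eq_empty_or_nonempty (B' \ B) with he | ⟨b', hb'⟩
    · have : B' ⊆ B := by rwa [← Finset.sdiff_eq_empty_iff_subset]
      exact le_antisymm (Finset.card_le_card hsub) (Finset.card_le_card this)
    · obtain ⟨b, hb, -⟩ := hx hB' hB b' hb'
      rw [Finset.sdiff_eq_empty_iff_subset.mpr hsub] at hb
      exact absurd hb (Finset.notMem_empty b)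
  | succ n ih =>
    intro B B' hcd hB hB'
    have hne : (B \ B').Nonempty := by rw [← Finset.card_pos, hcd]; omega
    obtain ⟨b, hb⟩ := hne
    obtain ⟨b', hb', hB2⟩ := hx hB hB' b hb
    rw [Finset.mem_sdiff] at hb hb'
    have hb'B : b' ∉ B := hb'.2
    have hbne : b' ≠ b := fun h => hb'.2 (h ▸ hb.1)
    have hcard2 : (insert b' (B.erase b)).card = B.card := by
      rw [Finset.card_insert_of_notMem (fun h => hb'B (Finset.mem_of_mem_erase h)),
        Finset.card_erase_of_mem hb.1]
      have : 1 ≤ B.card := Finset.card_pos.mpr ⟨b, hb.1⟩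
      omega
    have hsd : (insert b' (B.erase b)) \ B' = (B \ B').erase b := by
      ext x
      simp only [Finset.mem_sdiff, Finset.mem_insert, Finset.mem_erase]
      constructor
      · rintro ⟨hx1 | ⟨hx1, hx2⟩, hx3⟩
        · exact absurd (hx1 ▸ hb'.1) hx3
        · exact ⟨hx1, hx2, hx3⟩
      · rintro ⟨hx1, hx2, hx3⟩; exact ⟨Or.inr ⟨hx1, hx2⟩, hx3⟩
    have := ih (insert b' (B.erase b)) B' (by rw [hsd, Finset.card_erase_of_mem (Finset.mem_sdiff.mpr hb), hcd]; rfl) hB2 hB'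
    omega

/-- Independence: subsets of bases. -/
def Ind (Base : Finset G → Prop) (X : Finset G) : Prop := ∃ B, Base B ∧ X ⊆ B

theorem ind_subset {X Y : Finset G} (h : Ind Base Y) (hXY : X ⊆ Y) : Ind Base X := by
  obtain ⟨B, hB, hY⟩ := h; exact ⟨B, hB, hXY.trans hY⟩

theorem augment (hx : Exch Base) {X Y : Finset G} (hX : Ind Base X) (hY : Ind Base Y)
    (hc : X.card < Y.card) : ∃ y ∈ Y \ X, Ind Base (insert y X) := by
  by_contra hcon
  push_neg at hcon
  obtain ⟨B1, hB1, hXB1⟩ := hX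
  obtain ⟨B2, hB2, hYB2⟩ := hY
  -- induction on the potential
  suffices h : ∀ n B1 B2, Base B1 → Base B2 → X ⊆ B1 → Y ⊆ B2 →
      (B2 \ (Y ∪ B1)).card + (B1 \ (X ∪ B2)).card ≤ n → False by
    exact h _ B1 B2 hB1 hB2 hXB1 hYB2 le_rfl
  intro n
  induction n with
  | zero =>
    intro B1 B2 hB1 hB2 hXB1 hYB2 hpot
    have h1 : B2 ⊆ Y ∪ B1 := by
      rw [← Finset.sdiff_eq_empty_iff_subset, ← Finset.card_eq_zero]; omega
    have h2 : B1 ⊆ X ∪ B2 := by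
      rw [← Finset.sdiff_eq_empty_iff_subset, ← Finset.card_eq_zero]; omega
    -- Y ∩ B1 ⊆ X
    have hYB1X : Y ∩ B1 ⊆ X := by
      intro y hy
      rw [Finset.mem_inter] at hy
      by_contra hyX
      exact hcon y (Finset.mem_sdiff.mpr ⟨hy.1, hyX⟩) ⟨B1, hB1, Finset.insert_subset hy.2 hXB1⟩
    have e1 : (B1 \ B2).card = (B2 \ B1).card := by
      have hc1 := Finset.card_sdiff_add_card_inter B1 B2
      have hc2 := Finset.card_sdiff_add_card_inter B2 B1
      rw [Finset.inter_comm] at hc2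
      have := equicard hx B1 B2 hB1 hB2
      omega
    have s1 : Y \ B1 ⊆ B2 \ B1 := fun y hy => by
      rw [Finset.mem_sdiff] at *; exact ⟨hYB2 hy.1, hy.2⟩
    have s2 : B1 \ B2 ⊆ X \ B2 := fun z hz => by
      rw [Finset.mem_sdiff] at *
      rcases Finset.mem_union.mp (h2 hz.1) with h | h
      · exact ⟨h, hz.2⟩
      · exact absurd h hz.2
    have s3 : Y ∩ B1 ⊆ X ∩ B2 := fun y hy =>
      Finset.mem_inter.mpr ⟨hYB1X hy, hYB2 (Finset.mem_inter.mp hy).1⟩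
    have hY' := Finset.card_inter_add_card_sdiff Y B1
    have hX' := Finset.card_inter_add_card_sdiff X B2
    have c1 := Finset.card_le_card s1
    have c2 := Finset.card_le_card s2
    have c3 := Finset.card_le_card s3
    omega
  | succ n ih =>
    intro B1 B2 hB1 hB2 hXB1 hYB2 hpot
    rcases Finset.eq_empty_or_nonempty (B2 \ (Y ∪ B1)) with he1 | ⟨x, hx1⟩
    · rcases Finset.eq_empty_or_nonempty (B1 \ (X ∪ B2)) with he2 | ⟨x, hx2⟩
      · exact ih B1 B2 hB1 hB2 hXB1 hYB2 (by rw [he1, he2]; simp)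
      · -- exchange x out of B1
        rw [Finset.mem_sdiff, Finset.mem_union] at hx2
        push_neg at hx2
        obtain ⟨hxB1, hxX, hxB2⟩ := hx2
        obtain ⟨y, hy, hB1'⟩ := hx hB1 hB2 x (Finset.mem_sdiff.mpr ⟨hxB1, hxB2⟩)
        rw [Finset.mem_sdiff] at hy
        set B1' := insert y (B1.erase x) with hB1'_def
        have hXB1' : X ⊆ B1' := fun z hz => Finset.mem_insert.mpr
          (Or.inr (Finset.mem_erase.mpr ⟨fun h => hxX (h ▸ hz), hXB1 hz⟩))
        have key1 : B1' \ (X ∪ B2) = (B1 \ (X ∪ B2)).erase x := by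
          ext z
          simp only [hB1'_def, Finset.mem_sdiff, Finset.mem_insert, Finset.mem_erase,
            Finset.mem_union]
          constructor
          · rintro ⟨hz1 | ⟨hz1, hz2⟩, hz3⟩
            · exact absurd (Or.inr (hz1 ▸ hy.1)) hz3
            · exact ⟨hz1, hz2, hz3⟩
          · rintro ⟨hz1, hz2, hz3⟩; exact ⟨Or.inr ⟨hz1, hz2⟩, hz3⟩
        have key2 : B2 \ (Y ∪ B1') ⊆ B2 \ (Y ∪ B1) := by
          intro z hz
          simp only [hB1'_def, Finset.mem_sdiff, Finset.mem_union, Finset.mem_insert,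
            Finset.mem_erase] at hz ⊢
          push_neg at hz ⊢
          refine ⟨hz.1, hz.2.1, fun hzB1 => ?_⟩
          exact (hz.2.2.2 (fun h => hxB2 (h ▸ hz.1))) hzB1
        have hc1 : (B1' \ (X ∪ B2)).card = (B1 \ (X ∪ B2)).card - 1 := by
          rw [key1, Finset.card_erase_of_mem]
          rw [Finset.mem_sdiff, Finset.mem_union]; push_neg; exact ⟨hxB1, hxX, hxB2⟩
        have hc1' : 1 ≤ (B1 \ (X ∪ B2)).card := Finset.card_pos.mpr
          ⟨x, by rw [Finset.mem_sdiff, Finset.mem_union]; push_neg; exact ⟨hxB1, hxX, hxB2⟩⟩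
        have hc2 := Finset.card_le_card key2
        exact ih B1' B2 hB1' hB2 hXB1' hYB2 (by omega)
    · -- exchange x out of B2
      rw [Finset.mem_sdiff, Finset.mem_union] at hx1
      push_neg at hx1
      obtain ⟨hxB2, hxY, hxB1⟩ := hx1
      obtain ⟨y, hy, hB2'⟩ := hx hB2 hB1 x (Finset.mem_sdiff.mpr ⟨hxB2, hxB1⟩)
      rw [Finset.mem_sdiff] at hy
      set B2' := insert y (B2.erase x) with hB2'_def
      have hYB2' : Y ⊆ B2' := fun z hz => Finset.mem_insert.mpr
        (Or.inr (Finset.mem_erase.mpr ⟨fun h => hxY (h ▸ hz), hYB2 hz⟩))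
      have key1 : B2' \ (Y ∪ B1) = (B2 \ (Y ∪ B1)).erase x := by
        ext z
        simp only [hB2'_def, Finset.mem_sdiff, Finset.mem_insert, Finset.mem_erase,
          Finset.mem_union]
        constructor
        · rintro ⟨hz1 | ⟨hz1, hz2⟩, hz3⟩
          · exact absurd (Or.inr (hz1 ▸ hy.1)) hz3
          · exact ⟨hz1, hz2, hz3⟩
        · rintro ⟨hz1, hz2, hz3⟩; exact ⟨Or.inr ⟨hz1, hz2⟩, hz3⟩
      have key2 : B1 \ (X ∪ B2') ⊆ B1 \ (X ∪ B2) := by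
        intro z hz
        simp only [hB2'_def, Finset.mem_sdiff, Finset.mem_union, Finset.mem_insert,
          Finset.mem_erase] at hz ⊢
        push_neg at hz ⊢
        refine ⟨hz.1, hz.2.1, fun hzB2 => ?_⟩
        exact (hz.2.2.2 (fun h => hxB1 (h ▸ hz.1))) hzB2
      have hc1 : (B2' \ (Y ∪ B1)).card = (B2 \ (Y ∪ B1)).card - 1 := by
        rw [key1, Finset.card_erase_of_mem]
        rw [Finset.mem_sdiff, Finset.mem_union]; push_neg; exact ⟨hxB2, hxY, hxB1⟩
      have hc1' : 1 ≤ (B2 \ (Y ∪ B1)).card := Finset.card_pos.mpr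
        ⟨x, by rw [Finset.mem_sdiff, Finset.mem_union]; push_neg; exact ⟨hxB2, hxY, hxB1⟩⟩
      have hc2 := Finset.card_le_card key2
      exact ih B1 B2' hB1 hB2' hXB1 hYB2' (by omega)

end BMaux
-- continuation: rank from bases
namespace BMaux
variable {G : Type*} [DecidableEq G] [Fintype G] {Base : Finset G → Prop}

/-- Rank: the largest cardinality of an independent subset. -/
noncomputable def rho (Base : Finset G → Prop) (Z : Finset G) : ℕ :=
  sSup {n | ∃ X, Ind Base X ∧ X ⊆ Z ∧ X.card = n}

theorem rho_bddAbove (Z : Finset G) : BddAbove {n | ∃ X, Ind Base X ∧ X ⊆ Z ∧ X.card = n} :=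
  ⟨Z.card, fun n ⟨X, _, hXZ, hc⟩ => hc ▸ Finset.card_le_card hXZ⟩

theorem rho_spec (hne : ∃ B, Base B) (Z : Finset G) :
    ∃ X, Ind Base X ∧ X ⊆ Z ∧ X.card = rho Base Z := by
  have hmem : rho Base Z ∈ {n | ∃ X, Ind Base X ∧ X ⊆ Z ∧ X.card = n} := by
    apply Nat.sSup_mem _ (rho_bddAbove Z)
    obtain ⟨B, hB⟩ := hne
    exact ⟨0, ∅, ⟨B, hB, Finset.empty_subset B⟩, Finset.empty_subset Z, rfl⟩
  exact hmem

theorem le_rho {X Z : Finset G} (hX : Ind Base X) (hXZ : X ⊆ Z) : X.card ≤ rho Base Z :=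
  le_csSup (rho_bddAbove Z) ⟨X, hX, hXZ, rfl⟩

theorem rho_le_card (hne : ∃ B, Base B) (Z : Finset G) : rho Base Z ≤ Z.card := by
  obtain ⟨X, _, hXZ, hc⟩ := rho_spec hne Z
  exact hc ▸ Finset.card_le_card hXZ

theorem rho_mono (hne : ∃ B, Base B) {Z1 Z2 : Finset G} (h : Z1 ⊆ Z2) :
    rho Base Z1 ≤ rho Base Z2 := by
  obtain ⟨X, hX, hXZ, hc⟩ := rho_spec hne Z1
  exact hc ▸ le_rho hX (hXZ.trans h)

theorem rho_insert_le (hne : ∃ B, Base B) (Z : Finset G) (x : G) :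
    rho Base (insert x Z) ≤ rho Base Z + 1 := by
  obtain ⟨X, hX, hXZ, hc⟩ := rho_spec hne (insert x Z)
  have h1 : X.erase x ⊆ Z := fun z hz => by
    rcases Finset.mem_insert.mp (hXZ (Finset.mem_of_mem_erase hz)) with h | h
    · exact absurd h (Finset.mem_erase.mp hz).1
    · exact h
  have h2 : (X.erase x).card ≤ rho Base Z :=
    le_rho (ind_subset hX (Finset.erase_subset x X)) h1
  have := Finset.card_erase_le (s := X) (a := x)
  have := Finset.pred_card_le_card_erase (s := X) (a := x)
  omega

/-- Extension lemma: an independent subset of `Z` extends to one of full rank in `Z`. -/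
theorem extension (hx : Exch Base) (hne : ∃ B, Base B) {X Z : Finset G}
    (hX : Ind Base X) (hXZ : X ⊆ Z) :
    ∃ Y, X ⊆ Y ∧ Y ⊆ Z ∧ Ind Base Y ∧ Y.card = rho Base Z := by
  suffices h : ∀ m (X : Finset G), Ind Base X → X ⊆ Z → rho Base Z ≤ X.card + m →
      ∃ Y, X ⊆ Y ∧ Y ⊆ Z ∧ Ind Base Y ∧ Y.card = rho Base Z by
    exact h (rho Base Z) X hX hXZ (by omega)
  intro m
  induction m with
  | zero =>
    intro X hX hXZ hm
    exact ⟨X, Finset.Subset.refl X, hXZ, hX, le_antisymm (le_rho hX hXZ) (by omega)⟩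
  | succ m ih =>
    intro X hX hXZ hm
    rcases eq_or_lt_of_le (le_rho hX hXZ) with heq | hlt
    · exact ⟨X, Finset.Subset.refl X, hXZ, hX, heq.symm ▸ rfl⟩
    · obtain ⟨W, hW, hWZ, hWc⟩ := rho_spec hne Z
      obtain ⟨y, hy, hyInd⟩ := augment hx hX hW (by omega)
      rw [Finset.mem_sdiff] at hy
      have hcard : (insert y X).card = X.card + 1 := Finset.card_insert_of_notMem hy.2
      obtain ⟨Y, hY1, hY2, hY3, hY4⟩ := ih (insert y X) hyInd
        (Finset.insert_subset (hWZ hy.1) hXZ) (by omega)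
      exact ⟨Y, (Finset.subset_insert y X).trans hY1, hY2, hY3, hY4⟩

theorem rho_submod (hx : Exch Base) (hne : ∃ B, Base B) (A B' : Finset G) :
    rho Base (A ∪ B') + rho Base (A ∩ B') ≤ rho Base A + rho Base B' := by
  obtain ⟨X, hX, hXZ, hXc⟩ := rho_spec hne (A ∩ B')
  obtain ⟨Y, hXY, hYZ, hY, hYc⟩ := extension hx hne hX
    (hXZ.trans (Finset.inter_subset_union.trans (Finset.Subset.refl _)))
  have h1 : (Y ∩ A).card ≤ rho Base A := le_rho (ind_subset hY (Finset.inter_subset_left)) Finset.inter_subset_right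
  have h2 : (Y ∩ B').card ≤ rho Base B' := le_rho (ind_subset hY (Finset.inter_subset_left)) Finset.inter_subset_right
  have h3 : (Y ∩ A) ∪ (Y ∩ B') = Y := by
    rw [← Finset.inter_union_distrib_left]
    exact Finset.inter_eq_left.mpr hYZ
  have h4 : (Y ∩ A) ∩ (Y ∩ B') = Y ∩ (A ∩ B') := by
    ext z; simp only [Finset.mem_inter]; tauto
  have h5 : X ⊆ Y ∩ (A ∩ B') := Finset.subset_inter hXY hXZ
  have h6 := Finset.card_le_card h5
  have h7 := Finset.card_union_add_card_inter (Y ∩ A) (Y ∩ B')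
  rw [h3, h4] at h7
  omega

theorem base_iff (hx : Exch Base) (hne : ∃ B, Base B) (B : Finset G) :
    Base B ↔ Ind Base B ∧ B.card = rho Base Finset.univ := by
  constructor
  · intro hB
    refine ⟨⟨B, hB, Finset.Subset.refl B⟩, le_antisymm (le_rho ⟨B, hB, Finset.Subset.refl B⟩ (Finset.subset_univ B)) ?_⟩
    obtain ⟨X, ⟨B'', hB'', hXB''⟩, _, hXc⟩ := rho_spec hne (Finset.univ : Finset G)
    calc rho Base Finset.univ = X.card := hXc.symm
      _ ≤ B''.card := Finset.card_le_card hXB''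
      _ = B.card := equicard hx B'' B hB'' hB
  · rintro ⟨⟨B', hB', hBB'⟩, hc⟩
    have hcB' : B'.card ≤ rho Base Finset.univ :=
      le_rho ⟨B', hB', Finset.Subset.refl B'⟩ (Finset.subset_univ B')
    have : B = B' := Finset.eq_of_subset_of_card_le hBB' (by omega)
    exact this ▸ hB'

end BMaux
namespace BMaux
section RankSide
variable {G : Type*} [DecidableEq G] [Fintype G] (ρ : Finset G → ℕ)

/-- Independence for a rank function. -/
def IndR (X : Finset G) : Prop := ρ X = X.card

/-- Bases for a rank function. -/
def BaseR (B : Finset G) : Prop := IndR ρ B ∧ B.card = ρ Finset.univ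

variable {ρ}
variable (hmono : ∀ ⦃X Y : Finset G⦄, X ⊆ Y → ρ X ≤ ρ Y)
  (hstep : ∀ (X : Finset G) (x : G), ρ (insert x X) ≤ ρ X + 1)
  (hsub : ∀ X Y : Finset G, ρ (X ∪ Y) + ρ (X ∩ Y) ≤ ρ X + ρ Y)
  (hcard : ∀ X : Finset G, ρ X ≤ X.card)

include hstep in
theorem rho_union_le (X W : Finset G) : ρ (X ∪ W) ≤ ρ X + W.card := by
  induction W using Finset.induction_on with
  | empty => simp
  | @insert a W ha ih =>
    have h1 : X ∪ insert a W = insert a (X ∪ W) := by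
      ext z; simp only [Finset.mem_insert, Finset.mem_union]; tauto
    have h2 := hstep (X ∪ W) a
    have h3 : (insert a W).card = W.card + 1 := Finset.card_insert_of_notMem ha
    rw [h1]
    omega

include hstep hcard in
theorem indR_subset {X Y : Finset G} (hX : IndR ρ X) (hYX : Y ⊆ X) : IndR ρ Y := by
  have h1 : X = Y ∪ (X \ Y) := by rw [Finset.union_sdiff_of_subset hYX]
  have h2 : ρ X ≤ ρ Y + (X \ Y).card := by
    have := rho_union_le hstep Y (X \ Y); rwa [← h1] at this
  have h3 := Finset.card_sdiff_add_card_eq_card hYX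
  have h4 := hcard Y
  have h5 := Finset.card_le_card hYX
  unfold IndR at *
  omega

include hmono hstep hsub hcard in
theorem L1 {X Z : Finset G} (hX : IndR ρ X) (hXZ : X ⊆ Z) (hlt : X.card < ρ Z) :
    ∃ z ∈ Z \ X, IndR ρ (insert z X) := by
  by_contra hcon
  push_neg at hcon
  have hflat : ∀ z ∈ Z \ X, ρ (insert z X) = ρ X := by
    intro z hz
    rw [Finset.mem_sdiff] at hz
    have h1 := hstep X z
    have h2 := hmono (Finset.subset_insert z X)
    have h3 : (insert z X).card = X.card + 1 := Finset.card_insert_of_notMem hz.2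
    have h4 := hcon z (Finset.mem_sdiff.mpr hz)
    unfold IndR at *
    omega
  have hkey : ∀ W : Finset G, W ⊆ Z \ X → ρ (X ∪ W) = ρ X := by
    intro W
    induction W using Finset.induction_on with
    | empty => simp
    | @insert a W ha ih =>
      intro hsubZ
      have haZ : a ∈ Z \ X := hsubZ (Finset.mem_insert_self a W)
      have hWZ : W ⊆ Z \ X := (Finset.subset_insert a W).trans hsubZ
      have h1 : (X ∪ W) ∪ (insert a X) = insert a (X ∪ W) := by
        ext z; simp only [Finset.mem_insert, Finset.mem_union]; tauto
      have h2 : X ⊆ (X ∪ W) ∩ (insert a X) :=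
        Finset.subset_inter Finset.subset_union_left (Finset.subset_insert a X)
      have h3 := hsub (X ∪ W) (insert a X)
      rw [h1] at h3
      have h4 := hmono h2
      have h5 := hflat a haZ
      have h6 := ih hWZ
      have h8 : X ∪ W ⊆ insert a (X ∪ W) := Finset.subset_insert _ _
      have h9 := hmono h8
      have h10 : X ∪ insert a W = insert a (X ∪ W) := by
        ext z; simp only [Finset.mem_insert, Finset.mem_union]; tauto
      rw [h10]
      omega
  have h1 := hkey (Z \ X) (Finset.Subset.refl _)
  rw [Finset.union_sdiff_self_eq_union] at h1
  have h2 := hmono (Finset.subset_union_right : Z ⊆ X ∪ Z)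
  unfold IndR at hX
  omega

include hmono hstep hsub hcard in
theorem extensionR {X Z : Finset G} (hX : IndR ρ X) (hXZ : X ⊆ Z) :
    ∃ Y, X ⊆ Y ∧ Y ⊆ Z ∧ IndR ρ Y ∧ Y.card = ρ Z := by
  suffices h : ∀ m (X : Finset G), IndR ρ X → X ⊆ Z → ρ Z ≤ X.card + m →
      ∃ Y, X ⊆ Y ∧ Y ⊆ Z ∧ IndR ρ Y ∧ Y.card = ρ Z by
    exact h (ρ Z) X hX hXZ (by omega)
  intro m
  induction m with
  | zero =>
    intro X hX hXZ hm
    have := hmono hXZ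
    exact ⟨X, Finset.Subset.refl X, hXZ, hX, by unfold IndR at hX; omega⟩
  | succ m ih =>
    intro X hX hXZ hm
    rcases eq_or_lt_of_le (show X.card ≤ ρ Z from hX ▸ hmono hXZ) with heq | hlt
    · exact ⟨X, Finset.Subset.refl X, hXZ, hX, heq⟩
    · obtain ⟨z, hz, hzInd⟩ := L1 hmono hstep hsub hcard hX hXZ hlt
      rw [Finset.mem_sdiff] at hz
      have hcd : (insert z X).card = X.card + 1 := Finset.card_insert_of_notMem hz.2
      obtain ⟨Y, hY1, hY2, hY3, hY4⟩ := ih (insert z X) hzInd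
        (Finset.insert_subset hz.1 hXZ) (by omega)
      exact ⟨Y, (Finset.subset_insert z X).trans hY1, hY2, hY3, hY4⟩

include hmono hstep hsub hcard in
theorem augmentR {X Y : Finset G} (hX : IndR ρ X) (hY : IndR ρ Y) (hc : X.card < Y.card) :
    ∃ y ∈ Y \ X, IndR ρ (insert y X) := by
  have h1 : ρ (X ∪ Y) ≥ Y.card := hY ▸ hmono Finset.subset_union_right
  obtain ⟨z, hz, hzI⟩ := L1 hmono hstep hsub hcard hX (Finset.subset_union_left : X ⊆ X ∪ Y) (by omega)
  rw [Finset.mem_sdiff, Finset.mem_union] at hz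
  exact ⟨z, Finset.mem_sdiff.mpr ⟨hz.1.resolve_left hz.2, hz.2⟩, hzI⟩

include hmono hstep hsub hcard in
theorem baseR_nonempty : ∃ B, BaseR ρ B := by
  have hind : IndR ρ (∅ : Finset G) := by
    have := hcard (∅ : Finset G); unfold IndR; simpa using this
  obtain ⟨Y, -, -, hY3, hY4⟩ := extensionR hmono hstep hsub hcard hind
    (Finset.empty_subset Finset.univ)
  exact ⟨Y, hY3, hY4⟩

include hmono hstep hsub hcard in
theorem exchR : Exch (BaseR ρ) := by
  rintro B B' ⟨hBi, hBc⟩ ⟨hB'i, hB'c⟩ b hb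
  rw [Finset.mem_sdiff] at hb
  have hXi : IndR ρ (B.erase b) := indR_subset hstep hcard hBi (Finset.erase_subset b B)
  have hXc : (B.erase b).card = B.card - 1 := Finset.card_erase_of_mem hb.1
  have hBpos : 1 ≤ B.card := Finset.card_pos.mpr ⟨b, hb.1⟩
  obtain ⟨b', hb', hbI⟩ := augmentR hmono hstep hsub hcard hXi hB'i (by omega)
  rw [Finset.mem_sdiff] at hb'
  have hb'B : b' ∉ B := by
    intro h
    exact hb'.2 (Finset.mem_erase.mpr ⟨fun he => hb.2 (he ▸ hb'.1), h⟩)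
  refine ⟨b', Finset.mem_sdiff.mpr ⟨hb'.1, hb'B⟩, hbI, ?_⟩
  rw [Finset.card_insert_of_notMem hb'.2, hXc]
  omega

include hmono hstep hsub hcard in
theorem rho_baseR_eq (Z : Finset G) : rho (BaseR ρ) Z = ρ Z := by
  have hne := baseR_nonempty hmono hstep hsub hcard
  apply le_antisymm
  · obtain ⟨X, ⟨B, hB, hXB⟩, hXZ, hXc⟩ := rho_spec hne Z
    have : IndR ρ X := indR_subset hstep hcard hB.1 hXB
    calc rho (BaseR ρ) Z = X.card := hXc.symm
      _ = ρ X := this.symm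
      _ ≤ ρ Z := hmono hXZ
  · have hind : IndR ρ (∅ : Finset G) := by
      have := hcard (∅ : Finset G); unfold IndR; simpa using this
    obtain ⟨Y, -, hY2, hY3, hY4⟩ := extensionR hmono hstep hsub hcard hind
      (Finset.empty_subset Z)
    obtain ⟨W, hYW, -, hW3, hW4⟩ := extensionR hmono hstep hsub hcard hY3
      (Finset.subset_univ Y)
    exact hY4 ▸ le_rho ⟨W, ⟨hW3, hW4⟩, hYW⟩ hY2

end RankSide
end BMaux
namespace BMaux
section Glue
open Sum
variable {E F : Type*} [Fintype E] [Fintype F] [DecidableEq E] [DecidableEq F]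

theorem ds_insert_l (a : E) (s : Finset E) (t : Finset F) :
    insert (inl a) (s.disjSum t) = (insert a s).disjSum t := by
  ext x; cases x <;> simp

theorem ds_insert_r (b : F) (s : Finset E) (t : Finset F) :
    insert (inr b) (s.disjSum t) = s.disjSum (insert b t) := by
  ext x; cases x <;> simp

theorem ds_erase_l (a : E) (s : Finset E) (t : Finset F) :
    (s.disjSum t).erase (inl a) = (s.erase a).disjSum t := by
  ext x; cases x <;> simp [Finset.mem_erase]

theorem ds_erase_r (b : F) (s : Finset E) (t : Finset F) :
    (s.disjSum t).erase (inr b) = s.disjSum (t.erase b) := by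
  ext x; cases x <;> simp [Finset.mem_erase]

theorem ds_union (s s' : Finset E) (t t' : Finset F) :
    (s.disjSum t) ∪ (s'.disjSum t') = (s ∪ s').disjSum (t ∪ t') := by
  ext x; cases x <;> simp

theorem ds_inter (s s' : Finset E) (t t' : Finset F) :
    (s.disjSum t) ∩ (s'.disjSum t') = (s ∩ s').disjSum (t ∩ t') := by
  ext x; cases x <;> simp

theorem ds_mono {s s' : Finset E} {t t' : Finset F} (hs : s ⊆ s') (ht : t ⊆ t') :
    s.disjSum t ⊆ s'.disjSum t' := by
  intro x hx; cases x with
  | inl a => simp only [Finset.inl_mem_disjSum] at *; exact hs hx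
  | inr b => simp only [Finset.inr_mem_disjSum] at *; exact ht hx

variable {Base : Finset (E ⊕ F) → Prop} {Reg : Finset E → Finset F → Prop}
variable (hx : Exch Base) (hReg : ∀ I J, Reg I J ↔ Base (Iᶜ.disjSum J)) (h0 : Reg ∅ ∅)

include hReg h0 in
theorem base_nonempty : ∃ B, Base B :=
  ⟨(Finset.univ : Finset E).disjSum ∅, by
    have := (hReg ∅ ∅).mp h0; rwa [Finset.compl_empty] at this⟩

include hx hReg h0 in
theorem base_card {B : Finset (E ⊕ F)} (hB : Base B) : B.card = Fintype.card E := by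
  have h1 : Base ((Finset.univ : Finset E).disjSum ∅) := by
    have := (hReg ∅ ∅).mp h0; rwa [Finset.compl_empty] at this
  have := equicard hx B _ hB h1
  rw [this, Finset.card_disjSum, Finset.card_empty, Finset.card_univ]
  omega

include hx hReg h0 in
theorem reg_card {I : Finset E} {J : Finset F} (h : Reg I J) : I.card = J.card := by
  have h1 := base_card hx hReg h0 ((hReg I J).mp h)
  rw [Finset.card_disjSum, Finset.card_compl] at h1
  have := Finset.card_le_univ I
  omega

include hx hReg h0 in
theorem rho_univ_eq : rho Base (Finset.univ : Finset (E ⊕ F)) = Fintype.card E := by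
  obtain ⟨X, ⟨B, hB, hXB⟩, -, hXc⟩ := rho_spec (base_nonempty hReg h0) (Finset.univ : Finset (E ⊕ F))
  apply le_antisymm
  · rw [← hXc]
    exact (Finset.card_le_card hXB).trans (le_of_eq (base_card hx hReg h0 hB))
  · have h1 : Base ((Finset.univ : Finset E).disjSum ∅) := by
      have := (hReg ∅ ∅).mp h0; rwa [Finset.compl_empty] at this
    have h2 := le_rho ⟨_, h1, Finset.Subset.refl _⟩ (Finset.subset_univ _)
    rwa [Finset.card_disjSum, Finset.card_empty, Finset.card_univ] at h2

include hx hReg h0 in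
theorem rho_rowfull (J : Finset F) :
    rho Base ((Finset.univ : Finset E).disjSum J) = Fintype.card E := by
  apply le_antisymm
  · exact (rho_mono (base_nonempty hReg h0) (Finset.subset_univ _)).trans
      (le_of_eq (rho_univ_eq hx hReg h0))
  · have h1 : Base ((Finset.univ : Finset E).disjSum ∅) := by
      have := (hReg ∅ ∅).mp h0; rwa [Finset.compl_empty] at this
    have h2 := le_rho ⟨_, h1, Finset.Subset.refl _⟩
      (ds_mono (Finset.Subset.refl _) (Finset.empty_subset J))
    rwa [Finset.card_disjSum, Finset.card_empty, Finset.card_univ] at h2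

include hx hReg h0 in
theorem bridge (S : Finset E) (T : Finset F) :
    sSup {d | ∃ I J, Reg I J ∧ I ⊆ S ∧ J ⊆ T ∧ I.card = d} + Sᶜ.card
      = rho Base (Sᶜ.disjSum T) := by
  have hne := base_nonempty hReg h0
  set D := {d | ∃ I J, Reg I J ∧ I ⊆ S ∧ J ⊆ T ∧ I.card = d} with hD
  have hD0 : (0 : ℕ) ∈ D := ⟨∅, ∅, h0, Finset.empty_subset S, Finset.empty_subset T, rfl⟩
  have hDbdd : BddAbove D := ⟨Fintype.card E, fun d ⟨I, J, _, _, _, hc⟩ =>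
    hc ▸ Finset.card_le_univ I⟩
  have hbase0 : Base ((Finset.univ : Finset E).disjSum ∅) := by
    have := (hReg ∅ ∅).mp h0; rwa [Finset.compl_empty] at this
  -- every element of D gives a lower bound on rho
  have hle : ∀ d ∈ D, d + Sᶜ.card ≤ rho Base (Sᶜ.disjSum T) := by
    rintro d ⟨I, J, hIJ, hIS, hJT, hc⟩
    have hIndX : Ind Base (Sᶜ.disjSum J) :=
      ⟨Iᶜ.disjSum J, (hReg I J).mp hIJ,
        ds_mono (Finset.compl_subset_compl.mpr hIS) (Finset.Subset.refl J)⟩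
    have h2 := le_rho hIndX (ds_mono (Finset.Subset.refl _) hJT)
    rw [Finset.card_disjSum] at h2
    have h3 := reg_card hx hReg h0 hIJ
    omega
  -- construct a maximum-size regular minor
  have hIndX0 : Ind Base (Sᶜ.disjSum (∅ : Finset F)) :=
    ⟨_, hbase0, ds_mono (Finset.subset_univ _) (Finset.Subset.refl _)⟩
  obtain ⟨Y, hXY, hYZ, hYInd, hYc⟩ := extension hx hne hIndX0
    (ds_mono (Finset.Subset.refl _) (Finset.empty_subset T))
  have hYL : Y.toLeft = Sᶜ := by
    apply Finset.Subset.antisymm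
    · have := Finset.toLeft_subset_toLeft hYZ; rwa [Finset.toLeft_disjSum] at this
    · have := Finset.toLeft_subset_toLeft hXY; rwa [Finset.toLeft_disjSum] at this
  have hYR : Y.toRight ⊆ T := by
    have := Finset.toRight_subset_toRight hYZ; rwa [Finset.toRight_disjSum] at this
  set J := Y.toRight with hJdef
  have hYsub : Y ⊆ (Finset.univ : Finset E).disjSum J := by
    conv_lhs => rw [← Finset.toLeft_disjSum_toRight (u := Y)]
    exact ds_mono (Finset.subset_univ _) (Finset.Subset.refl _)
  obtain ⟨W, hYW, hWZ, hWInd, hWc⟩ := extension hx hne hYInd hYsub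
  rw [rho_rowfull hx hReg h0] at hWc
  have hWbase : Base W := by
    rw [base_iff hx hne W]
    exact ⟨hWInd, by rw [hWc, rho_univ_eq hx hReg h0]⟩
  have hWR : W.toRight = J := by
    apply Finset.Subset.antisymm
    · have := Finset.toRight_subset_toRight hWZ; rwa [Finset.toRight_disjSum] at this
    · exact Finset.toRight_subset_toRight hYW
  have hWL : Sᶜ ⊆ W.toLeft := by
    rw [← hYL]; exact Finset.toLeft_subset_toLeft hYW
  have hRegW : Reg W.toLeftᶜ J := by
    rw [hReg, compl_compl, ← hWR, Finset.toLeft_disjSum_toRight]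
    exact hWbase
  have hIS : W.toLeftᶜ ⊆ S := by
    rw [← compl_compl S]; exact Finset.compl_subset_compl.mpr hWL
  have hdmem : W.toLeftᶜ.card ∈ D := ⟨W.toLeftᶜ, J, hRegW, hIS, hYR, rfl⟩
  have hcardJ : W.toLeftᶜ.card = J.card := reg_card hx hReg h0 hRegW
  -- |Y| = |Sᶜ| + |J|
  have hYcard : Sᶜ.card + J.card = Y.card := by
    rw [← Finset.card_toLeft_add_card_toRight (u := Y), hYL]
  apply le_antisymm
  · have hsup : sSup D ∈ D := Nat.sSup_mem ⟨0, hD0⟩ hDbdd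
    exact hle _ hsup
  · have h2 : W.toLeftᶜ.card ≤ sSup D := le_csSup hDbdd hdmem
    omega

end Glue
end BMaux
namespace BMaux
section Glue2
open Sum
variable {E F : Type*} [Fintype E] [Fintype F] [DecidableEq E] [DecidableEq F]

theorem tl_erase_l (u : Finset (E ⊕ F)) (a : E) :
    (u.erase (inl a)).toLeft = u.toLeft.erase a := by
  ext x; simp [Finset.mem_erase]

theorem tr_erase_l (u : Finset (E ⊕ F)) (a : E) :
    (u.erase (inl a)).toRight = u.toRight := by
  ext x; simp [Finset.mem_erase]

theorem tl_erase_r (u : Finset (E ⊕ F)) (b : F) :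
    (u.erase (inr b)).toLeft = u.toLeft := by
  ext x; simp [Finset.mem_erase]

theorem tr_erase_r (u : Finset (E ⊕ F)) (b : F) :
    (u.erase (inr b)).toRight = u.toRight.erase b := by
  ext x; simp [Finset.mem_erase]

theorem tl_univ : (Finset.univ : Finset (E ⊕ F)).toLeft = Finset.univ := by
  ext x; simp

theorem tr_univ : (Finset.univ : Finset (E ⊕ F)).toRight = Finset.univ := by
  ext x; simp

theorem compl_swap {L : Finset E} {e i : E} (he : e ∈ L) (hi : i ∉ L) :
    (insert i (L.erase e))ᶜ = insert e (Lᶜ.erase i) := by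
  have hei : e ≠ i := fun h => hi (h ▸ he)
  ext x
  simp only [Finset.mem_compl, Finset.mem_insert, Finset.mem_erase]
  constructor
  · intro h
    push_neg at h
    by_cases hxe : x = e
    · exact Or.inl hxe
    · exact Or.inr ⟨h.1, h.2 hxe⟩
  · rintro (rfl | ⟨h1, h2⟩) <;> push_neg
    · exact ⟨fun h => hi (h ▸ he), fun h => absurd rfl h⟩
    · exact ⟨h1, fun _ => h2⟩

/-- generic: monotonicity from insert-monotonicity -/
theorem mono_of_insert {G : Type*} [DecidableEq G] {ρ : Finset G → ℕ}
    (hs : ∀ (X : Finset G) (x : G), ρ X ≤ ρ (insert x X)) :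
    ∀ ⦃X Y : Finset G⦄, X ⊆ Y → ρ X ≤ ρ Y := by
  have haux : ∀ (X W : Finset G), ρ X ≤ ρ (X ∪ W) := by
    intro X W
    induction W using Finset.induction_on with
    | empty => simp
    | @insert a W ha ih =>
      have h1 : X ∪ insert a W = insert a (X ∪ W) := by
        ext z; simp only [Finset.mem_insert, Finset.mem_union]; tauto
      rw [h1]
      exact ih.trans (hs (X ∪ W) a)
  intro X Y h
  have := haux X (Y \ X)
  rwa [Finset.union_sdiff_of_subset h] at this

end Glue2
end BMaux

open BMaux Sum in
/-- Cryptomorphic characterization of bimatroids via relative rank functions: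
`r` is the relative rank function of a bimatroid on `E × F` iff it is bounded by
`min(|S|, |T|)`, unit-increasing in each argument, and bisubmodular. -/
theorem relRank_cryptomorphism {E F : Type*} [Fintype E] [Fintype F]
    [DecidableEq E] [DecidableEq F] (r : Finset E → Finset F → ℕ) :
    (∃ A : Bimatroid E F, ∀ S T, r S T = A.relRank S T) ↔
      ((∀ S T, r S T ≤ min S.card T.card) ∧
       (∀ S T, ∀ e : E, r S T ≤ r (insert e S) T ∧ r (insert e S) T ≤ r S T + 1) ∧
       (∀ S T, ∀ f : F, r S T ≤ r S (insert f T) ∧ r S (insert f T) ≤ r S T + 1) ∧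
       (∀ S S' T T', r (S ∪ S') (T ∩ T') + r (S ∩ S') (T ∪ T') ≤ r S T + r S' T')) := by
  constructor
  · rintro ⟨A, hA⟩
    have hReg : ∀ (I : Finset E) (J : Finset F),
        A.Reg I J ↔ (fun B : Finset (E ⊕ F) => A.Reg B.toLeftᶜ B.toRight) (Iᶜ.disjSum J) := by
      intro I J
      show A.Reg I J ↔ A.Reg (Iᶜ.disjSum J).toLeftᶜ (Iᶜ.disjSum J).toRight
      rw [Finset.toLeft_disjSum, Finset.toRight_disjSum, compl_compl]
    have hx : Exch (fun B : Finset (E ⊕ F) => A.Reg B.toLeftᶜ B.toRight) := by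
      rintro B B' hB hB' b hb
      rw [Finset.mem_sdiff] at hb
      cases b with
      | inl e =>
        have he1 : e ∈ B.toLeft := Finset.mem_toLeft.mpr hb.1
        have he2 : e ∉ B'.toLeft := fun h => hb.2 (Finset.mem_toLeft.mp h)
        have hmem : e ∈ B'.toLeftᶜ \ B.toLeftᶜ := by
          rw [Finset.mem_sdiff, Finset.mem_compl, Finset.mem_compl]
          exact ⟨he2, fun h => h he1⟩
        rcases A.exch_row B.toLeftᶜ B.toRight B'.toLeftᶜ B'.toRight hB hB' e hmem with
          ⟨i, hi, hre⟩ | ⟨j', hj', hre⟩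
        · rw [Finset.mem_sdiff, Finset.mem_compl, Finset.mem_compl] at hi
          have hiL : i ∉ B.toLeft := hi.1
          have hiL' : i ∈ B'.toLeft := not_not.mp hi.2
          refine ⟨inl i, Finset.mem_sdiff.mpr
            ⟨Finset.mem_toLeft.mp hiL', fun h => hiL (Finset.mem_toLeft.mpr h)⟩, ?_⟩
          show A.Reg (insert (inl i) (B.erase (inl e))).toLeftᶜ
            (insert (inl i) (B.erase (inl e))).toRight
          rw [Finset.toLeft_insert_inl, tl_erase_l, Finset.toRight_insert_inl, tr_erase_l,
            compl_swap he1 hiL]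
          exact hre
        · rw [Finset.mem_sdiff] at hj'
          refine ⟨inr j', Finset.mem_sdiff.mpr
            ⟨Finset.mem_toRight.mp hj'.1, fun h => hj'.2 (Finset.mem_toRight.mpr h)⟩, ?_⟩
          show A.Reg (insert (inr j') (B.erase (inl e))).toLeftᶜ
            (insert (inr j') (B.erase (inl e))).toRight
          rw [Finset.toLeft_insert_inr, tl_erase_l, Finset.toRight_insert_inr, tr_erase_l,
            Finset.compl_erase]
          exact hre
      | inr j =>
        have hj1 : j ∈ B.toRight := Finset.mem_toRight.mpr hb.1
        have hj2 : j ∉ B'.toRight := fun h => hb.2 (Finset.mem_toRight.mp h)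
        have hmem : j ∈ B.toRight \ B'.toRight := Finset.mem_sdiff.mpr ⟨hj1, hj2⟩
        rcases A.exch_col B.toLeftᶜ B.toRight B'.toLeftᶜ B'.toRight hB hB' j hmem with
          ⟨j', hj', hre⟩ | ⟨i, hi, hre⟩
        · rw [Finset.mem_sdiff] at hj'
          refine ⟨inr j', Finset.mem_sdiff.mpr
            ⟨Finset.mem_toRight.mp hj'.1, fun h => hj'.2 (Finset.mem_toRight.mpr h)⟩, ?_⟩
          show A.Reg (insert (inr j') (B.erase (inr j))).toLeftᶜ
            (insert (inr j') (B.erase (inr j))).toRight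
          rw [Finset.toLeft_insert_inr, tl_erase_r, Finset.toRight_insert_inr, tr_erase_r]
          exact hre
        · rw [Finset.mem_sdiff, Finset.mem_compl, Finset.mem_compl] at hi
          have hiL : i ∉ B.toLeft := hi.1
          have hiL' : i ∈ B'.toLeft := not_not.mp hi.2
          refine ⟨inl i, Finset.mem_sdiff.mpr
            ⟨Finset.mem_toLeft.mp hiL', fun h => hiL (Finset.mem_toLeft.mpr h)⟩, ?_⟩
          show A.Reg (insert (inl i) (B.erase (inr j))).toLeftᶜ
            (insert (inl i) (B.erase (inr j))).toRight
          rw [Finset.toLeft_insert_inl, tl_erase_r, Finset.toRight_insert_inl, tr_erase_r,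
            Finset.compl_insert]
          exact hre
    have h0 : A.Reg ∅ ∅ := A.reg_empty
    have hne := base_nonempty (Base := fun B : Finset (E ⊕ F) => A.Reg B.toLeftᶜ B.toRight) hReg h0
    have hbridge : ∀ (S : Finset E) (T : Finset F),
        A.relRank S T + Sᶜ.card
          = rho (fun B : Finset (E ⊕ F) => A.Reg B.toLeftᶜ B.toRight) (Sᶜ.disjSum T) :=
      fun S T => bridge hx hReg h0 S T
    refine ⟨?_, ?_, ?_, ?_⟩
    · intro S T
      rw [hA]
      show sSup {d | ∃ I J, A.Reg I J ∧ I ⊆ S ∧ J ⊆ T ∧ I.card = d} ≤ min S.card T.card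
      have hmem : (0 : ℕ) ∈ {d | ∃ I J, A.Reg I J ∧ I ⊆ S ∧ J ⊆ T ∧ I.card = d} :=
        ⟨∅, ∅, A.reg_empty, Finset.empty_subset S, Finset.empty_subset T, rfl⟩
      apply csSup_le ⟨0, hmem⟩
      rintro d ⟨I, J, hIJ, hIS, hJT, rfl⟩
      exact le_min (Finset.card_le_card hIS) (A.card_eq I J hIJ ▸ Finset.card_le_card hJT)
    · intro S T e
      by_cases heS : e ∈ S
      · rw [Finset.insert_eq_self.mpr heS]; exact ⟨le_rfl, Nat.le_succ _⟩
      · have hb1 := hbridge S T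
        have hb2 := hbridge (insert e S) T
        rw [Finset.compl_insert] at hb2
        have he : e ∈ Sᶜ := Finset.mem_compl.mpr heS
        have hc1 : Sᶜ.card = (Sᶜ.erase e).card + 1 := by
          rw [Finset.card_erase_of_mem he]
          have := Finset.card_pos.mpr ⟨e, he⟩
          omega
        have hm1 : rho (fun B : Finset (E ⊕ F) => A.Reg B.toLeftᶜ B.toRight) ((Sᶜ.erase e).disjSum T) ≤ rho (fun B : Finset (E ⊕ F) => A.Reg B.toLeftᶜ B.toRight) (Sᶜ.disjSum T) :=
          rho_mono hne (ds_mono (Finset.erase_subset e Sᶜ) (Finset.Subset.refl T))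
        have hm2 : rho (fun B : Finset (E ⊕ F) => A.Reg B.toLeftᶜ B.toRight) (Sᶜ.disjSum T) ≤ rho (fun B : Finset (E ⊕ F) => A.Reg B.toLeftᶜ B.toRight) ((Sᶜ.erase e).disjSum T) + 1 := by
          have heq : Sᶜ.disjSum T = insert (inl e) ((Sᶜ.erase e).disjSum T) := by
            rw [ds_insert_l, Finset.insert_erase he]
          rw [heq]
          exact rho_insert_le hne _ _
        rw [← hA S T] at hb1
        rw [← hA (insert e S) T] at hb2
        constructor <;> omega
    · intro S T f
      have hb1 := hbridge S T
      have hb2 := hbridge S (insert f T)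
      have hm1 : rho (fun B : Finset (E ⊕ F) => A.Reg B.toLeftᶜ B.toRight) (Sᶜ.disjSum T) ≤ rho (fun B : Finset (E ⊕ F) => A.Reg B.toLeftᶜ B.toRight) (Sᶜ.disjSum (insert f T)) :=
        rho_mono hne (ds_mono (Finset.Subset.refl _) (Finset.subset_insert f T))
      have hm2 : rho (fun B : Finset (E ⊕ F) => A.Reg B.toLeftᶜ B.toRight) (Sᶜ.disjSum (insert f T)) ≤ rho (fun B : Finset (E ⊕ F) => A.Reg B.toLeftᶜ B.toRight) (Sᶜ.disjSum T) + 1 := by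
        rw [← ds_insert_r]
        exact rho_insert_le hne _ _
      rw [← hA S T] at hb1
      rw [← hA S (insert f T)] at hb2
      constructor <;> omega
    · intro S S' T T'
      have hb1 := hbridge S T
      have hb2 := hbridge S' T'
      have hb3 := hbridge (S ∩ S') (T ∪ T')
      have hb4 := hbridge (S ∪ S') (T ∩ T')
      have hsm := rho_submod hx hne (Sᶜ.disjSum T) (S'ᶜ.disjSum T')
      rw [ds_union, ds_inter, ← Finset.compl_inter, ← Finset.compl_union] at hsm
      have hcc := Finset.card_union_add_card_inter Sᶜ S'ᶜ
      rw [← Finset.compl_inter, ← Finset.compl_union] at hcc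
      rw [← hA S T] at hb1
      rw [← hA S' T'] at hb2
      rw [← hA (S ∩ S') (T ∪ T')] at hb3
      rw [← hA (S ∪ S') (T ∩ T')] at hb4
      omega
  · rintro ⟨h1, h2, h3, h4⟩
    set ρ : Finset (E ⊕ F) → ℕ := fun X => r X.toLeftᶜ X.toRight + X.toLeft.card with hρ
    have hstep' : ∀ (X : Finset (E ⊕ F)) x, ρ X ≤ ρ (insert x X) ∧ ρ (insert x X) ≤ ρ X + 1 := by
      intro X x
      by_cases hxX : x ∈ X
      · rw [Finset.insert_eq_self.mpr hxX]; exact ⟨le_rfl, Nat.le_succ _⟩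
      cases x with
      | inl e =>
        have he : e ∉ X.toLeft := fun h => hxX (Finset.mem_toLeft.mp h)
        have heC : e ∈ X.toLeftᶜ := Finset.mem_compl.mpr he
        have hcd : (insert e X.toLeft).card = X.toLeft.card + 1 :=
          Finset.card_insert_of_notMem he
        have hr := h2 (X.toLeftᶜ.erase e) X.toRight e
        rw [Finset.insert_erase heC] at hr
        simp only [hρ, Finset.toLeft_insert_inl, Finset.toRight_insert_inl,
          Finset.compl_insert, hcd]
        omega
      | inr f =>
        have hf : f ∉ X.toRight := fun h => hxX (Finset.mem_toRight.mp h)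
        have hr := h3 X.toLeftᶜ X.toRight f
        simp only [hρ, Finset.toLeft_insert_inr, Finset.toRight_insert_inr]
        omega
    have hmono : ∀ ⦃X Y : Finset (E ⊕ F)⦄, X ⊆ Y → ρ X ≤ ρ Y :=
      mono_of_insert (fun X x => (hstep' X x).1)
    have hstep : ∀ (X : Finset (E ⊕ F)) x, ρ (insert x X) ≤ ρ X + 1 :=
      fun X x => (hstep' X x).2
    have hcard : ∀ X : Finset (E ⊕ F), ρ X ≤ X.card := by
      intro X
      have hm := (h1 X.toLeftᶜ X.toRight).trans (min_le_right _ _)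
      have hc := Finset.card_toLeft_add_card_toRight (u := X)
      simp only [hρ]
      omega
    have hsub : ∀ X Y : Finset (E ⊕ F), ρ (X ∪ Y) + ρ (X ∩ Y) ≤ ρ X + ρ Y := by
      intro X Y
      have hh := h4 X.toLeftᶜ Y.toLeftᶜ X.toRight Y.toRight
      simp only [hρ, Finset.toLeft_union, Finset.toRight_union, Finset.toLeft_inter,
        Finset.toRight_inter, Finset.compl_union, Finset.compl_inter]
      have hcc := Finset.card_union_add_card_inter X.toLeft Y.toLeft
      omega
    have hexch : Exch (BaseR ρ) := exchR hmono hstep hsub hcard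
    have hr0 : ∀ T : Finset F, r ∅ T = 0 := by
      intro T
      have := h1 ∅ T
      simpa using this
    have hρuniv : ρ (Finset.univ : Finset (E ⊕ F)) = Fintype.card E := by
      simp only [hρ, tl_univ, tr_univ, Finset.compl_univ, hr0, Finset.card_univ]
      omega
    have hReg : ∀ (I : Finset E) (J : Finset F),
        (fun I J => BaseR ρ (Iᶜ.disjSum J)) I J ↔ BaseR ρ (Iᶜ.disjSum J) := fun I J => Iff.rfl
    have hbase : ∀ (I : Finset E) (J : Finset F), BaseR ρ (Iᶜ.disjSum J) ↔
        (ρ (Iᶜ.disjSum J) = Iᶜ.card + J.card ∧ Iᶜ.card + J.card = Fintype.card E) := by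
      intro I J
      unfold BaseR IndR
      rw [Finset.card_disjSum, hρuniv]
    have h0 : BaseR ρ ((∅ : Finset E)ᶜ.disjSum (∅ : Finset F)) := by
      rw [hbase]
      refine ⟨?_, by simp⟩
      simp only [hρ, Finset.compl_empty, Finset.toLeft_disjSum, Finset.toRight_disjSum,
        Finset.compl_univ, hr0, Finset.card_empty]
      try omega
    -- the bimatroid
    refine ⟨⟨fun I J => BaseR ρ (Iᶜ.disjSum J), ?_, h0, ?_, ?_⟩, ?_⟩
    · -- card_eq
      intro I J hIJ
      exact reg_card hexch hReg h0 hIJ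
    · -- exch_row
      intro I J I' J' hIJ hI'J' i' hi'
      rw [Finset.mem_sdiff] at hi'
      have hmem : inl i' ∈ (Iᶜ.disjSum J) \ (I'ᶜ.disjSum J') := by
        rw [Finset.mem_sdiff, Finset.inl_mem_disjSum, Finset.inl_mem_disjSum,
          Finset.mem_compl, Finset.mem_compl]
        exact ⟨hi'.2, fun h => h hi'.1⟩
      obtain ⟨b', hb', hB2⟩ := hexch hIJ hI'J' (inl i') hmem
      rw [Finset.mem_sdiff] at hb'
      cases b' with
      | inl i =>
        obtain ⟨hb1, hb2⟩ := hb'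
        rw [Finset.inl_mem_disjSum, Finset.mem_compl] at hb1
        rw [Finset.inl_mem_disjSum, Finset.mem_compl] at hb2
        have hiI : i ∈ I := not_not.mp hb2
        left
        refine ⟨i, Finset.mem_sdiff.mpr ⟨hiI, hb1⟩, ?_⟩
        show BaseR ρ ((insert i' (I.erase i))ᶜ.disjSum J)
        rw [compl_swap hiI hi'.2, ← ds_insert_l, ← ds_erase_l]
        exact hB2
      | inr j' =>
        obtain ⟨hb1, hb2⟩ := hb'
        rw [Finset.inr_mem_disjSum] at hb1 hb2
        right
        refine ⟨j', Finset.mem_sdiff.mpr ⟨hb1, hb2⟩, ?_⟩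
        show BaseR ρ ((insert i' I)ᶜ.disjSum (insert j' J))
        rw [Finset.compl_insert, ← ds_insert_r, ← ds_erase_l]
        exact hB2
    · -- exch_col
      intro I J I' J' hIJ hI'J' j hj
      rw [Finset.mem_sdiff] at hj
      have hmem : inr j ∈ (Iᶜ.disjSum J) \ (I'ᶜ.disjSum J') := by
        rw [Finset.mem_sdiff, Finset.inr_mem_disjSum, Finset.inr_mem_disjSum]
        exact ⟨hj.1, hj.2⟩
      obtain ⟨b', hb', hB2⟩ := hexch hIJ hI'J' (inr j) hmem
      rw [Finset.mem_sdiff] at hb'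
      cases b' with
      | inr j' =>
        obtain ⟨hb1, hb2⟩ := hb'
        rw [Finset.inr_mem_disjSum] at hb1 hb2
        left
        refine ⟨j', Finset.mem_sdiff.mpr ⟨hb1, hb2⟩, ?_⟩
        show BaseR ρ (Iᶜ.disjSum (insert j' (J.erase j)))
        rw [← ds_insert_r, ← ds_erase_r]
        exact hB2
      | inl i =>
        obtain ⟨hb1, hb2⟩ := hb'
        rw [Finset.inl_mem_disjSum, Finset.mem_compl] at hb1
        rw [Finset.inl_mem_disjSum, Finset.mem_compl] at hb2
        have hiI : i ∈ I := not_not.mp hb2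
        right
        refine ⟨i, Finset.mem_sdiff.mpr ⟨hiI, hb1⟩, ?_⟩
        show BaseR ρ ((I.erase i)ᶜ.disjSum (J.erase j))
        rw [Finset.compl_erase, ← ds_insert_l, ← ds_erase_r]
        exact hB2
    · -- relRank = r
      intro S T
      have hb := bridge hexch hReg h0 S T
      have hb2 : rho (BaseR ρ) (Sᶜ.disjSum T) = ρ (Sᶜ.disjSum T) :=
        rho_baseR_eq hmono hstep hsub hcard _
      have hb3 : ρ (Sᶜ.disjSum T) = r S T + Sᶜ.card := by
        simp only [hρ, Finset.toLeft_disjSum, Finset.toRight_disjSum, compl_compl]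
      show r S T = sSup {d | ∃ I J, BaseR ρ (Iᶜ.disjSum J) ∧ I ⊆ S ∧ J ⊆ T ∧ I.card = d}
      omega
end

section
/- Let A be a bimatroid on E × F. Define its transpose Aᵀ on F × E by declaring (J,I) a regular minor of Aᵀ iff (I,J) is a regular minor of A. Then Aᵀ is a bimatroid, and its extended matroid (on F ⊔ E) is isomorphic to the dual matroid of the extended matroid of A (on E ⊔ F) under the identification of F ⊔ E with E ⊔ F. -/
open Finset

namespace Bimatroid

variable {E F : Type*}

def extBasis (I : Finset E) (J : Finset F) : Set (E ⊕ F) :=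
  Sum.inl '' (↑I)ᶜ ∪ Sum.inr '' ↑J

@[simp] lemma inl_mem_extBasis {I : Finset E} {J : Finset F} {e : E} :
    Sum.inl e ∈ extBasis I J ↔ e ∉ I := by
  simp [extBasis]

@[simp] lemma inr_mem_extBasis {I : Finset E} {J : Finset F} {f : F} :
    Sum.inr f ∈ extBasis I J ↔ f ∈ J := by
  simp [extBasis]

lemma extBasis_injective₂ {I I' : Finset E} {J J' : Finset F}
    (h : extBasis I J = extBasis I' J') : I = I' ∧ J = J' := by
  constructor
  · ext e; simpa [not_iff_not] using congrArg (Sum.inl e ∈ ·) h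
  · ext f; simpa using congrArg (Sum.inr f ∈ ·) h

lemma image_sumComm_extBasis (I : Finset E) (J : Finset F) :
    Equiv.sumComm F E '' extBasis J I = (extBasis I J)ᶜ := by
  ext (e | f) <;> simp

variable {I : Finset E} {J : Finset F}

lemma insert_inl_diff_inl_extBasis [DecidableEq E] {i i' : E} (h : i ≠ i') :
    insert (Sum.inl i) (extBasis I J \ {Sum.inl i'}) = extBasis (insert i' (I.erase i)) J := by
  ext (_ | _) <;> simp; grind

lemma insert_inr_diff_inl_extBasis [DecidableEq E] [DecidableEq F] {i' : E} {j' : F} :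
    insert (Sum.inr j') (extBasis I J \ {Sum.inl i'}) = extBasis (insert i' I) (insert j' J) := by
  ext (_ | _) <;> simp; grind

lemma insert_inr_diff_inr_extBasis [DecidableEq F] {j j' : F} :
    insert (Sum.inr j') (extBasis I J \ {Sum.inr j}) = extBasis I (insert j' (J.erase j)) := by
  ext (_ | _) <;> simp; grind

lemma insert_inl_diff_inr_extBasis [DecidableEq E] [DecidableEq F] {i : E} {j : F} :
    insert (Sum.inl i) (extBasis I J \ {Sum.inr j}) = extBasis (I.erase i) (J.erase j) := by
  ext (_ | _) <;> simp <;> tauto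

lemma extBasis_eq_coe [Fintype E] [DecidableEq E] [DecidableEq F] (I : Finset E) (J : Finset F) :
    extBasis I J = ↑(Iᶜ.image Sum.inl ∪ J.image Sum.inr) := by
  simp [extBasis]

def IsExtBasis (Reg : Finset E → Finset F → Prop) (S : Set (E ⊕ F)) : Prop :=
  ∃ I J, Reg I J ∧ extBasis I J = S

lemma isExtBasis_extBasis_iff {Reg : Finset E → Finset F → Prop} :
    IsExtBasis Reg (extBasis I J) ↔ Reg I J := by
  refine ⟨?_, fun h => ⟨I, J, h, rfl⟩⟩
  rintro ⟨I', J', h, hS⟩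
  obtain ⟨rfl, rfl⟩ := extBasis_injective₂ hS
  exact h

lemma isExtBasis_swap_iff {Reg : Finset E → Finset F → Prop} {S : Set (F ⊕ E)} :
    IsExtBasis (fun J I => Reg I J) S ↔ IsExtBasis Reg (Equiv.sumComm F E '' S)ᶜ := by
  constructor
  · rintro ⟨J, I, h, rfl⟩
    exact ⟨I, J, h, by rw [image_sumComm_extBasis, compl_compl]⟩
  · rintro ⟨I, J, h, hS⟩
    refine ⟨J, I, h, (Equiv.sumComm F E).injective.image_injective ?_⟩
    rw [image_sumComm_extBasis, hS, compl_compl]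

variable [DecidableEq E] [DecidableEq F]

def RowExchange (Reg : Finset E → Finset F → Prop) : Prop :=
  ∀ I J I' J', Reg I J → Reg I' J' → ∀ i' ∈ I' \ I,
    (∃ i ∈ I \ I', Reg (insert i' (I.erase i)) J) ∨
    (∃ j' ∈ J' \ J, Reg (insert i' I) (insert j' J))

def ColExchange (Reg : Finset E → Finset F → Prop) : Prop :=
  ∀ I J I' J', Reg I J → Reg I' J' → ∀ j ∈ J \ J',
    (∃ j' ∈ J' \ J, Reg I (insert j' (J.erase j))) ∨
    (∃ i ∈ I \ I', Reg (I.erase i) (J.erase j))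

theorem exchangeProperty_isExtBasis_iff {Reg : Finset E → Finset F → Prop} :
    Matroid.ExchangeProperty (IsExtBasis Reg) ↔ RowExchange Reg ∧ ColExchange Reg := by
  constructor
  · intro h
    refine ⟨fun I J I' J' hIJ hIJ' i' hi' => ?_, fun I J I' J' hIJ hIJ' j hj => ?_⟩
    · obtain ⟨b | b, hb, hB⟩ := h _ _ ⟨I, J, hIJ, rfl⟩ ⟨I', J', hIJ', rfl⟩ (Sum.inl i')
        (by simpa [and_comm] using hi')
      · have hb : b ∈ I \ I' := by simpa [and_comm] using hb
        rw [insert_inl_diff_inl_extBasis (ne_of_mem_of_not_mem (mem_sdiff.1 hb).1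
          (mem_sdiff.1 hi').2), isExtBasis_extBasis_iff] at hB
        exact .inl ⟨b, hb, hB⟩
      · right
        rw [insert_inr_diff_inl_extBasis, isExtBasis_extBasis_iff] at hB
        exact ⟨b, by simpa using hb, hB⟩
    · obtain ⟨b | b, hb, hB⟩ := h _ _ ⟨I, J, hIJ, rfl⟩ ⟨I', J', hIJ', rfl⟩ (Sum.inr j)
        (by simpa using hj)
      · right
        rw [insert_inl_diff_inr_extBasis, isExtBasis_extBasis_iff] at hB
        exact ⟨b, by simpa [and_comm] using hb, hB⟩
      · left
        rw [insert_inr_diff_inr_extBasis, isExtBasis_extBasis_iff] at hB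
        exact ⟨b, by simpa using hb, hB⟩
  · rintro ⟨hrow, hcol⟩ _ _ ⟨I, J, hIJ, rfl⟩ ⟨I', J', hIJ', rfl⟩ (i' | j) hx
    · have hi' : i' ∈ I' \ I := by simpa [and_comm] using hx
      obtain ⟨i, hi, hreg⟩ | ⟨j', hj', hreg⟩ := hrow I J I' J' hIJ hIJ' i' hi'
      · refine ⟨Sum.inl i, by simpa [and_comm] using hi, ?_⟩
        rwa [insert_inl_diff_inl_extBasis (ne_of_mem_of_not_mem (mem_sdiff.1 hi).1
          (mem_sdiff.1 hi').2), isExtBasis_extBasis_iff]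
      · refine ⟨Sum.inr j', by simpa using hj', ?_⟩
        rwa [insert_inr_diff_inl_extBasis, isExtBasis_extBasis_iff]
    · obtain ⟨j', hj', hreg⟩ | ⟨i, hi, hreg⟩ := hcol I J I' J' hIJ hIJ' j (by simpa using hx)
      · refine ⟨Sum.inr j', by simpa using hj', ?_⟩
        rwa [insert_inr_diff_inr_extBasis, isExtBasis_extBasis_iff]
      · refine ⟨Sum.inl i, by simpa [and_comm] using hi, ?_⟩
        rwa [insert_inl_diff_inr_extBasis, isExtBasis_extBasis_iff]

variable [Finite E] [Finite F]

def extMatroid (A : Bimatroid E F) : Matroid (E ⊕ F) :=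
  Matroid.ofIsBaseOfFinite Set.finite_univ (IsExtBasis A.Reg) ⟨_, _, _, A.reg_empty, rfl⟩
    (exchangeProperty_isExtBasis_iff.2 ⟨A.exch_row, A.exch_col⟩) fun _ _ => Set.subset_univ _

lemma isExtBasis_swap_eq_dual_isBase (A : Bimatroid E F) :
    IsExtBasis (fun J I => A.Reg I J) = (A.extMatroid✶.mapEquiv (Equiv.sumComm E F)).IsBase := by
  ext S
  rw [Matroid.mapEquiv_isBase_iff, Matroid.dual_isBase_iff (Set.subset_univ _), Equiv.sumComm_symm,
    isExtBasis_swap_iff, Set.compl_eq_univ_sdiff]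
  rfl

lemma exchangeProperty_isExtBasis_swap (A : Bimatroid E F) :
    Matroid.ExchangeProperty (IsExtBasis fun J I => A.Reg I J) :=
  A.isExtBasis_swap_eq_dual_isBase ▸ Matroid.isBase_exchange _

def transpose (A : Bimatroid E F) : Bimatroid F E where
  Reg J I := A.Reg I J
  card_eq J I h := (A.card_eq I J h).symm
  reg_empty := A.reg_empty
  exch_row := (exchangeProperty_isExtBasis_iff.1 A.exchangeProperty_isExtBasis_swap).1
  exch_col := (exchangeProperty_isExtBasis_iff.1 A.exchangeProperty_isExtBasis_swap).2

end Bimatroid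

open Bimatroid in
/-- The transpose of a bimatroid `A` (with `(J, I)` regular iff `(I, J)` is regular in `A`)
is a bimatroid, and its extended matroid on `F ⊔ E` is the dual of the extended matroid
of `A` on `E ⊔ F` under the canonical identification `F ⊔ E ≅ E ⊔ F`: its bases are
exactly the sets whose image under the identification is the complement of a basis. -/
theorem transpose_bimatroid {E F : Type*} [Fintype E] [Fintype F]
    [DecidableEq E] [DecidableEq F] (A : Bimatroid E F) :
    ∃ B : Bimatroid F E,
      (∀ J I, B.Reg J I ↔ A.Reg I J) ∧
      (∀ S : Finset (F ⊕ E),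
        (∃ J I, B.Reg J I ∧ S = Jᶜ.image Sum.inl ∪ I.image Sum.inr) ↔
        (∃ I J, A.Reg I J ∧
          S.image (Equiv.sumComm F E) = (Iᶜ.image Sum.inl ∪ J.image Sum.inr)ᶜ)) := by
  refine ⟨A.transpose, fun _ _ => Iff.rfl, fun S => ?_⟩
  calc (∃ J I, A.Reg I J ∧ S = Jᶜ.image Sum.inl ∪ I.image Sum.inr)
      ↔ IsExtBasis (fun J I => A.Reg I J) ↑S := by
        simp only [IsExtBasis, extBasis_eq_coe, Finset.coe_inj, eq_comm]
    _ ↔ IsExtBasis A.Reg (Equiv.sumComm F E '' ↑S)ᶜ := isExtBasis_swap_iff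
    _ ↔ _ := by
        simp only [IsExtBasis, extBasis_eq_coe, ← Finset.coe_image, ← Finset.coe_compl,
          Finset.coe_inj, eq_compl_comm]
end

section
/- Let A be a bimatroid on E × F with extended matroid Â on E ⊔ F. Call a pair (S,T) with S ⊆ E, T ⊆ F a vertical regular rectangle if |T| ≤ |S| and there exist I ⊆ S, J ⊆ T with |I| = |J| = |T| and (I,J) a regular minor of A (equivalently r(S,T) = |T|). Then the map (S,T) ↦ (E\S) ∪ T is a bijection from the set of vertical regular rectangles of A to the set of independent sets of the matroid Â. -/
theorem Finset.image_inl_union_image_inr {α β : Type*} [DecidableEq α] [DecidableEq β]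
    (s : Finset α) (t : Finset β) :
    s.image Sum.inl ∪ t.image Sum.inr = s.disjSum t := by
  ext x
  cases x <;> simp

namespace Bimatroid

variable {E F : Type*} [DecidableEq E] [DecidableEq F] (A : Bimatroid E F)

theorem exists_reg_erase_erase {I : Finset E} {J : Finset F} (h : A.Reg I J) {j : F}
    (hj : j ∈ J) : ∃ i ∈ I, A.Reg (I.erase i) (J.erase j) := by
  rcases A.exch_col I J ∅ ∅ h A.reg_empty j (by simpa using hj) with ⟨_, hj', _⟩ | ⟨i, hi, hreg⟩
  · simp at hj'
  · exact ⟨i, Finset.sdiff_subset hi, hreg⟩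

theorem exists_reg_of_subset_right {I : Finset E} {J T : Finset F} (h : A.Reg I J)
    (hTJ : T ⊆ J) : ∃ I' ⊆ I, A.Reg I' T := by
  induction J using Finset.strongInduction generalizing I with
  | H J ih =>
    obtain rfl | hT := hTJ.eq_or_ssubset
    · exact ⟨I, subset_rfl, h⟩
    obtain ⟨j, hjJ, hjT⟩ := Finset.exists_of_ssubset hT
    obtain ⟨i, -, hreg⟩ := A.exists_reg_erase_erase h hjJ
    obtain ⟨I', hI', hreg'⟩ := ih (J.erase j) (Finset.erase_ssubset hjJ) hreg
      (Finset.subset_erase.mpr ⟨hTJ, hjT⟩)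
    exact ⟨I', hI'.trans (Finset.erase_subset i I), hreg'⟩

def IsVerticalRegRect (S : Finset E) (T : Finset F) : Prop :=
  T.card ≤ S.card ∧ ∃ I J, A.Reg I J ∧ I ⊆ S ∧ J ⊆ T ∧ I.card = T.card ∧ J.card = T.card

theorem isVerticalRegRect_iff {S : Finset E} {T : Finset F} :
    A.IsVerticalRegRect S T ↔ ∃ I J, A.Reg I J ∧ I ⊆ S ∧ T ⊆ J := by
  constructor
  · rintro ⟨-, I, J, hreg, hIS, hJT, -, hJ⟩
    exact ⟨I, J, hreg, hIS, (Finset.eq_of_subset_of_card_le hJT hJ.ge).ge⟩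
  · rintro ⟨I, J, hreg, hIS, hTJ⟩
    obtain ⟨I', hI'I, hreg'⟩ := A.exists_reg_of_subset_right hreg hTJ
    have hcard : I'.card = T.card := A.card_eq _ _ hreg'
    exact ⟨hcard ▸ Finset.card_le_card (hI'I.trans hIS),
      I', T, hreg', hI'I.trans hIS, subset_rfl, hcard, rfl⟩

end Bimatroid

/-- The map `(S, T) ↦ (E \ S) ∪ T` is a bijection from the set of vertical regular
rectangles of a bimatroid `A` (pairs `(S, T)` with `|T| ≤ |S|` admitting a regular
minor `(I, J)` with `I ⊆ S`, `J ⊆ T`, `|I| = |J| = |T|`) onto the set of independent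
sets of the extended matroid `Â` (subsets of a basis of `Â`). -/
theorem vertical_rectangles_bij_indep {E F : Type*} [Fintype E] [Fintype F]
    [DecidableEq E] [DecidableEq F] (A : Bimatroid E F) :
    Set.BijOn
      (fun p : Finset E × Finset F =>
        (p.1ᶜ.image Sum.inl ∪ p.2.image Sum.inr : Finset (E ⊕ F)))
      {p : Finset E × Finset F | p.2.card ≤ p.1.card ∧
        ∃ I J, A.Reg I J ∧ I ⊆ p.1 ∧ J ⊆ p.2 ∧ I.card = p.2.card ∧ J.card = p.2.card}
      {S : Finset (E ⊕ F) | ∃ I J, A.Reg I J ∧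
        S ⊆ Iᶜ.image Sum.inl ∪ J.image Sum.inr} := by
  simp only [Finset.image_inl_union_image_inr]
  have indep_iff (S : Finset E) (T : Finset F) :
      (∃ I J, A.Reg I J ∧ Sᶜ.disjSum T ⊆ Iᶜ.disjSum J) ↔ ∃ I J, A.Reg I J ∧ I ⊆ S ∧ T ⊆ J := by
    simp only [Finset.disjSum_subset, Finset.toLeft_disjSum, Finset.toRight_disjSum,
      Finset.compl_subset_compl]
  refine ⟨?_, ?_, ?_⟩
  · rintro ⟨S, T⟩ hST
    exact (indep_iff S T).mpr (A.isVerticalRegRect_iff.mp hST)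
  · rintro ⟨S, T⟩ - ⟨S', T'⟩ - h
    simpa using h
  · intro X hX
    refine ⟨(X.toLeftᶜ, X.toRight), A.isVerticalRegRect_iff.mpr ?_, ?_⟩
    · exact (indep_iff _ _).mp (by simpa [Finset.toLeft_disjSum_toRight] using hX)
    · simp [Finset.toLeft_disjSum_toRight]
end

section
/- Cauchy–Binet compatibility of bimatroid products: Let A be a bimatroid on E × F and B a bimatroid on F × G. Then the set of pairs (I,K), I ⊆ E, K ⊆ G, |I| = |K|, for which there exists J ⊆ F such that (I,J) is a regular minor of A and (J,K) is a regular minor of B, is the set of regular minors of a bimatroid on E × G. -/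
section Aux

variable {E F G : Type*} [DecidableEq E] [DecidableEq F] [DecidableEq G]

private lemma sdiff_erase_aux (J J' : Finset F) (p j : F) (hpJ' : p ∈ J') (hjJ' : j ∉ J') :
    insert p (J.erase j) \ J' = (J \ J').erase j := by
  ext x
  simp only [Finset.mem_sdiff, Finset.mem_insert, Finset.mem_erase]
  constructor
  · rintro ⟨hx | ⟨hxj, hxJ⟩, hxJ'⟩
    · exact absurd (hx ▸ hpJ') hxJ'
    · exact ⟨hxj, hxJ, hxJ'⟩
  · rintro ⟨hxj, hxJ, hxJ'⟩
    exact ⟨Or.inr ⟨hxj, hxJ⟩, hxJ'⟩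

private lemma insert_erase_aux (J : Finset F) (p j : F) (hpJ : p ∉ J) (hj : j ∈ J) :
    insert j (insert p (J.erase j)) = insert p J := by
  ext x
  simp only [Finset.mem_insert, Finset.mem_erase]
  constructor
  · rintro (rfl | hx | ⟨_, hxJ⟩)
    exacts [Or.inr hj, Or.inl hx, Or.inr hxJ]
  · rintro (rfl | hxJ)
    · exact Or.inr (Or.inl rfl)
    · by_cases hxj : x = j
      · exact Or.inl hxj
      · exact Or.inr (Or.inr ⟨hxj, hxJ⟩)

private lemma not_mem_insert_erase_aux (J : Finset F) (p j : F) (hpJ : p ∉ J) (hj : j ∈ J) :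
    j ∉ insert p (J.erase j) := by
  simp only [Finset.mem_insert, Finset.mem_erase]
  rintro (rfl | ⟨h, _⟩)
  · exact hpJ hj
  · exact h rfl

/-- Key alternating-exchange lemma for `exch_row` of the product. -/
private lemma rowLoop (A : Bimatroid E F) (B : Bimatroid F G)
    (I I' : Finset E) (J' : Finset F) (K K' : Finset G) (i' : E)
    (hi'I : i' ∉ I) (hi'I' : i' ∈ I')
    (hI'J' : A.Reg I' J') (hJ'K' : B.Reg J' K') :
    ∀ n : ℕ, ∀ J : Finset F, ∀ p : F, (J \ J').card < n →
      p ∈ J' → p ∉ J → A.Reg (insert i' I) (insert p J) → B.Reg J K →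
      (∃ i ∈ I \ I', ∃ Jh, A.Reg (insert i' (I.erase i)) Jh ∧ B.Reg Jh K) ∨
      (∃ k' ∈ K' \ K, ∃ Jh, A.Reg (insert i' I) Jh ∧ B.Reg Jh (insert k' K)) := by
  intro n
  induction n using Nat.strong_induction_on with
  | _ n ih =>
    intro J p hn hpJ' hpJ hA hB
    rcases B.exch_row J K J' K' hB hJ'K' p (Finset.mem_sdiff.mpr ⟨hpJ', hpJ⟩) with
      ⟨j, hj, hBj⟩ | ⟨k', hk', hBk'⟩
    · -- B exchanged `p` for some `j ∈ J \ J'`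
      rw [Finset.mem_sdiff] at hj
      obtain ⟨hjJ, hjJ'⟩ := hj
      set Jh : Finset F := insert p (J.erase j) with hJhdef
      have heq : insert j Jh = insert p J := insert_erase_aux J p j hpJ hjJ
      have hjJh : j ∉ Jh := not_mem_insert_erase_aux J p j hpJ hjJ
      have hA' : A.Reg (insert i' I) (insert j Jh) := by rw [heq]; exact hA
      rcases A.exch_col (insert i' I) (insert j Jh) I' J' hA' hI'J' j
          (Finset.mem_sdiff.mpr ⟨Finset.mem_insert_self j Jh, hjJ'⟩) with
        ⟨jj, hjj, hAjj⟩ | ⟨ii, hii, hAii⟩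
      · -- A swaps `j` for a fresh column `jj ∈ J'`: recurse
        rw [Finset.mem_sdiff, Finset.mem_insert] at hjj
        obtain ⟨hjjJ', hjjn⟩ := hjj
        push_neg at hjjn
        have hAjj' : A.Reg (insert i' I) (insert jj Jh) := by
          rwa [Finset.erase_insert hjJh] at hAjj
        have hcard : (Jh \ J').card < (J \ J').card := by
          rw [hJhdef, sdiff_erase_aux J J' p j hpJ' hjJ']
          exact Finset.card_erase_lt_of_mem (Finset.mem_sdiff.mpr ⟨hjJ, hjJ'⟩)
        exact ih (J \ J').card hn Jh jj hcard hjjJ' hjjn.2 hAjj' hBj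
      · -- A deletes a row `ii ∈ I \ I'`: done (left alternative)
        rw [Finset.mem_sdiff, Finset.mem_insert] at hii
        obtain ⟨hiim, hiiI'⟩ := hii
        have hiine : ii ≠ i' := fun h => hiiI' (h ▸ hi'I')
        have hiiI : ii ∈ I := hiim.resolve_left hiine
        have hAii' : A.Reg (insert i' (I.erase ii)) Jh := by
          rwa [Finset.erase_insert_of_ne (Ne.symm hiine), Finset.erase_insert hjJh] at hAii
        exact Or.inl ⟨ii, Finset.mem_sdiff.mpr ⟨hiiI, hiiI'⟩, Jh, hAii', hBj⟩
    · -- B grows: done (right alternative)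
      exact Or.inr ⟨k', hk', insert p J, hA, hBk'⟩

/-- Key alternating-exchange lemma for `exch_col` of the product. -/
private lemma colLoop (A : Bimatroid E F) (B : Bimatroid F G)
    (I I' : Finset E) (J' : Finset F) (K K' : Finset G) (k : G)
    (hkK : k ∈ K) (hkK' : k ∉ K')
    (hI'J' : A.Reg I' J') (hJ'K' : B.Reg J' K') :
    ∀ n : ℕ, ∀ J : Finset F, ∀ p : F, (J \ J').card < n →
      p ∈ J' → p ∉ J → A.Reg I (insert p J) → B.Reg J (K.erase k) →
      (∃ k' ∈ K' \ K, ∃ Jh, A.Reg I Jh ∧ B.Reg Jh (insert k' (K.erase k))) ∨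
      (∃ i ∈ I \ I', ∃ Jh, A.Reg (I.erase i) Jh ∧ B.Reg Jh (K.erase k)) := by
  intro n
  induction n using Nat.strong_induction_on with
  | _ n ih =>
    intro J p hn hpJ' hpJ hA hB
    rcases B.exch_row J (K.erase k) J' K' hB hJ'K' p (Finset.mem_sdiff.mpr ⟨hpJ', hpJ⟩) with
      ⟨j, hj, hBj⟩ | ⟨k', hk', hBk'⟩
    · -- B exchanged `p` for some `j ∈ J \ J'`
      rw [Finset.mem_sdiff] at hj
      obtain ⟨hjJ, hjJ'⟩ := hj
      set Jh : Finset F := insert p (J.erase j) with hJhdef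
      have heq : insert j Jh = insert p J := insert_erase_aux J p j hpJ hjJ
      have hjJh : j ∉ Jh := not_mem_insert_erase_aux J p j hpJ hjJ
      have hA' : A.Reg I (insert j Jh) := by rw [heq]; exact hA
      rcases A.exch_col I (insert j Jh) I' J' hA' hI'J' j
          (Finset.mem_sdiff.mpr ⟨Finset.mem_insert_self j Jh, hjJ'⟩) with
        ⟨jj, hjj, hAjj⟩ | ⟨ii, hii, hAii⟩
      · -- recurse
        rw [Finset.mem_sdiff, Finset.mem_insert] at hjj
        obtain ⟨hjjJ', hjjn⟩ := hjj
        push_neg at hjjn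
        have hAjj' : A.Reg I (insert jj Jh) := by
          rwa [Finset.erase_insert hjJh] at hAjj
        have hcard : (Jh \ J').card < (J \ J').card := by
          rw [hJhdef, sdiff_erase_aux J J' p j hpJ' hjJ']
          exact Finset.card_erase_lt_of_mem (Finset.mem_sdiff.mpr ⟨hjJ, hjJ'⟩)
        exact ih (J \ J').card hn Jh jj hcard hjjJ' hjjn.2 hAjj' hBj
      · -- A deletes a row `ii ∈ I \ I'`: done (right alternative)
        have hAii' : A.Reg (I.erase ii) Jh := by
          rwa [Finset.erase_insert hjJh] at hAii
        exact Or.inr ⟨ii, hii, Jh, hAii', hBj⟩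
    · -- B grows by some `k' ∈ K' \ K.erase k`: done (left alternative)
      rw [Finset.mem_sdiff] at hk'
      obtain ⟨hk'K', hk'e⟩ := hk'
      have hk'ne : k' ≠ k := fun h => hkK' (h ▸ hk'K')
      have hk'K : k' ∉ K := fun h => hk'e (Finset.mem_erase.mpr ⟨hk'ne, h⟩)
      exact Or.inl ⟨k', Finset.mem_sdiff.mpr ⟨hk'K', hk'K⟩, insert p J, hA, hBk'⟩

end Aux

/-- Products of bimatroids: the pairs `(I, K)` for which there exists `J` with `(I, J)`
regular in `A` and `(J, K)` regular in `B` form the regular minors of a bimatroid on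
`E × G`. -/
theorem bimatroid_product_exists {E F G : Type*}
    [DecidableEq E] [DecidableEq F] [DecidableEq G]
    (A : Bimatroid E F) (B : Bimatroid F G) :
    ∃ C : Bimatroid E G, ∀ I K,
      C.Reg I K ↔ ∃ J, A.Reg I J ∧ B.Reg J K := by
  refine ⟨⟨fun I K => ∃ J, A.Reg I J ∧ B.Reg J K, ?_, ?_, ?_, ?_⟩, fun I K => Iff.rfl⟩
  · rintro I K ⟨J, hIJ, hJK⟩
    exact (A.card_eq I J hIJ).trans (B.card_eq J K hJK)
  · exact ⟨∅, A.reg_empty, B.reg_empty⟩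
  · -- exch_row
    rintro I K I' K' ⟨J, hIJ, hJK⟩ ⟨J', hI'J', hJ'K'⟩ i' hi'
    rw [Finset.mem_sdiff] at hi'
    obtain ⟨hi'I', hi'I⟩ := hi'
    rcases A.exch_row I J I' J' hIJ hI'J' i' (Finset.mem_sdiff.mpr ⟨hi'I', hi'I⟩) with
      ⟨i, hi, hAi⟩ | ⟨j', hj', hAj'⟩
    · exact Or.inl ⟨i, hi, J, hAi, hJK⟩
    · rw [Finset.mem_sdiff] at hj'
      exact rowLoop A B I I' J' K K' i' hi'I hi'I' hI'J' hJ'K'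
        ((J \ J').card + 1) J j' (Nat.lt_succ_self _) hj'.1 hj'.2 hAj' hJK
  · -- exch_col
    rintro I K I' K' ⟨J, hIJ, hJK⟩ ⟨J', hI'J', hJ'K'⟩ k hk
    rw [Finset.mem_sdiff] at hk
    obtain ⟨hkK, hkK'⟩ := hk
    rcases B.exch_col J K J' K' hJK hJ'K' k (Finset.mem_sdiff.mpr ⟨hkK, hkK'⟩) with
      ⟨k', hk', hBk'⟩ | ⟨j, hj, hBj⟩
    · exact Or.inl ⟨k', hk', J, hIJ, hBk'⟩
    · rw [Finset.mem_sdiff] at hj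
      obtain ⟨hjJ, hjJ'⟩ := hj
      rcases A.exch_col I J I' J' hIJ hI'J' j (Finset.mem_sdiff.mpr ⟨hjJ, hjJ'⟩) with
        ⟨j'', hj'', hAj''⟩ | ⟨i, hi, hAi⟩
      · rw [Finset.mem_sdiff] at hj''
        obtain ⟨hj''J', hj''J⟩ := hj''
        have hj''e : j'' ∉ J.erase j := fun h => hj''J (Finset.mem_of_mem_erase h)
        exact colLoop A B I I' J' K K' k hkK hkK' hI'J' hJ'K'
          ((J.erase j \ J').card + 1) (J.erase j) j'' (Nat.lt_succ_self _)
          hj''J' hj''e hAj'' hBj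
      · exact Or.inr ⟨i, hi, J.erase j, hAi, hBj⟩
end

section
/- Let M be a matroid of rank r on a finite set F, N a quotient of M on F (the identity map is a matroid morphism M → N), and Q a finite set of size r disjoint from F. Call T ⊆ F a basis of the quotient if T is independent in M and T spans N (contains a basis of N). Then the collection of subsets B̃ ⊆ Q ⊔ F with |B̃| = r such that B̃ ∩ F is a basis of the quotient is the set of bases of a matroid on Q ⊔ F. -/
open Set

namespace Matroid

variable {α : Type*} {M N : Matroid α} {I X Y T : Set α} {e f : α}

structure IsQuotient (N M : Matroid α) : Prop where
  ground_eq : N.E = M.E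
  isFlat_of_isFlat : ∀ X, N.IsFlat X → M.IsFlat X

lemma IsQuotient.closure_subset_closure (hNM : N.IsQuotient M) (X : Set α) :
    M.closure X ⊆ N.closure X := by
  rw [← closure_inter_ground, ← N.closure_inter_ground, hNM.ground_eq]
  calc M.closure (X ∩ M.E) ⊆ M.closure (N.closure (X ∩ M.E)) :=
        M.closure_subset_closure (N.subset_closure _ (hNM.ground_eq ▸ inter_subset_right))
    _ = N.closure (X ∩ M.E) := (hNM.isFlat_of_isFlat _ (N.isFlat_closure _)).closure

lemma IsQuotient.spanning (hNM : N.IsQuotient M) (hX : M.Spanning X) : N.Spanning X := by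
  rw [spanning_iff_ground_subset_closure (hNM.ground_eq ▸ hX.subset_ground), hNM.ground_eq,
    ← hX.closure_eq]
  exact hNM.closure_subset_closure X

lemma IsQuotient.insert_indep_of_notMem_closure (hNM : N.IsQuotient M) (hI : M.Indep I)
    (he : e ∈ M.E) (heI : e ∉ N.closure I) : M.Indep (insert e I) :=
  (hI.insert_indep_iff_of_notMem fun h ↦
      heI (N.subset_closure I (hNM.ground_eq ▸ hI.subset_ground) h)).2
    ⟨he, fun h ↦ heI (hNM.closure_subset_closure I h)⟩

lemma Spanning.exists_mem_notMem_closure (hY : M.Spanning Y) (hX : ¬ M.Spanning X)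
    (hXE : X ⊆ M.E) : ∃ y ∈ Y, y ∉ M.closure X := by
  by_contra! hYX
  refine hX ((spanning_iff_ground_subset_closure hXE).2 ?_)
  rw [← hY.closure_eq]
  exact closure_subset_closure_of_subset_closure hYX

lemma Spanning.insert_exchange (hS : M.Spanning (insert f T)) (he : e ∈ M.E)
    (heT : e ∉ M.closure T) : M.Spanning (insert e T) := by
  have hTE : T ⊆ M.E := (subset_insert f T).trans hS.subset_ground
  have hf : f ∈ M.closure (insert e T) := mem_closure_insert heT (hS.closure_eq ▸ he)
  rw [spanning_iff_ground_subset_closure (insert_subset he hTE), ← hS.closure_eq]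
  exact closure_subset_closure_of_subset_closure
    (insert_subset hf ((subset_insert e T).trans (M.subset_closure _ (insert_subset he hTE))))

end Matroid

open Matroid

section SumType

variable {Q F : Type*}

lemma Finset.coe_toRight (B : Finset (Q ⊕ F)) : (B.toRight : Set F) = {f | Sum.inr f ∈ B} := by
  ext; simp

lemma Matroid.Indep.exists_mem_notMem_indep_toRight_insert [DecidableEq Q] [DecidableEq F]
    {M : Matroid F} {S B : Finset (Q ⊕ F)} (hS : M.Indep S.toRight) (hB : M.Indep B.toRight)
    (hSB : S.card < B.card) : ∃ y ∈ B, y ∉ S ∧ M.Indep (insert y S).toRight := by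
  have hsum : ∀ X : Finset (Q ⊕ F),
      ((freeOn (univ : Set Q)).sum M).Indep (X : Set (Q ⊕ F)) ↔ M.Indep X.toRight := by
    simp [Finset.coe_toRight, preimage]
  simp only [← hsum] at *
  simpa only [Finset.coe_insert] using hS.augment_finset hB hSB

theorem Matroid.IsQuotient.exists_insert_erase_indep_spanning [DecidableEq Q] [DecidableEq F]
    {M N : Matroid F} (hNM : N.IsQuotient M) (hNE : N.E = univ) {b₁ b₂ : Finset (Q ⊕ F)}
    (hcard : b₁.card = b₂.card) (hi₁ : M.Indep b₁.toRight) (hs₁ : N.Spanning b₁.toRight)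
    (hi₂ : M.Indep b₂.toRight) (hs₂ : N.Spanning b₂.toRight) {x : Q ⊕ F} (hx₁ : x ∈ b₁)
    (hx₂ : x ∉ b₂) :
    ∃ y ∈ b₂ \ b₁, M.Indep (insert y (b₁.erase x)).toRight ∧
      N.Spanning (insert y (b₁.erase x)).toRight := by
  set S := b₁.erase x
  have hSi : M.Indep S.toRight :=
    hi₁.subset (Finset.coe_subset.2 (Finset.toRight_subset_toRight (b₁.erase_subset x)))
  have hS_lt : S.card < b₂.card := by
    rw [Finset.card_erase_of_mem hx₁, ← hcard]
    exact Nat.sub_lt (Finset.card_pos.2 ⟨x, hx₁⟩) one_pos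
  have hnew : ∀ y ∈ b₂, y ∉ S → y ∈ b₂ \ b₁ := fun y hy hyS ↦
    Finset.mem_sdiff.2 ⟨hy, fun hy₁ ↦ hyS (Finset.mem_erase.2 ⟨ne_of_mem_of_not_mem hy hx₂, hy₁⟩)⟩
  by_cases hSs : N.Spanning S.toRight
  · obtain ⟨y, hy₂, hyS, hyi⟩ := hSi.exists_mem_notMem_indep_toRight_insert hi₂ hS_lt
    exact ⟨y, hnew y hy₂ hyS, hyi, hSs.superset
      (Finset.coe_subset.2 (Finset.toRight_subset_toRight (Finset.subset_insert _ _)))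
      (by simp [hNE])⟩
  obtain ⟨g, hg₂, hgS⟩ := hs₂.exists_mem_notMem_closure hSs (by simp [hNE])
  obtain ⟨f, rfl⟩ : ∃ f, x = Sum.inr f := by
    rcases x with q | f
    · have hS : S.toRight = b₁.toRight := by ext; simp [S]
      exact absurd (hS ▸ hs₁) hSs
    · exact ⟨f, rfl⟩
  have hb₁ : b₁.toRight = insert f S.toRight := by
    rw [← Finset.toRight_insert_inr, Finset.insert_erase hx₁]
  refine ⟨Sum.inr g, hnew _ (Finset.mem_toRight.1 hg₂)
    fun h ↦ hgS (N.subset_closure _ (by simp [hNE]) (Finset.mem_toRight.2 h)), ?_, ?_⟩ <;>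
    rw [Finset.toRight_insert_inr, Finset.coe_insert]
  · exact hNM.insert_indep_of_notMem_closure hSi (by simp [← hNM.ground_eq, hNE]) hgS
  · exact (Finset.coe_insert f _ ▸ hb₁ ▸ hs₁).insert_exchange (by simp [hNE]) hgS

end SumType

theorem quotient_bases_matroid_general {F Q : Type*} [Fintype F]
    [DecidableEq F] [DecidableEq Q]
    (M N : Matroid F) (hME : M.E = Set.univ) (hNE : N.E = Set.univ)
    (hquot : ∀ X : Set F, N.IsFlat X → M.IsFlat X)
    (r : ℕ) (hr : ∀ B, M.IsBase B → B.ncard = r) :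
    IsBasisFamily (fun B : Finset (Q ⊕ F) =>
      B.card = r ∧
      M.Indep {f : F | Sum.inr f ∈ B} ∧
      N.Spanning {f : F | Sum.inr f ∈ B}) := by
  have hNM : N.IsQuotient M := ⟨hNE.trans hME.symm, hquot⟩
  simp only [← Finset.coe_toRight]
  refine ⟨?_, fun b₁ b₂ ⟨hc₁, hi₁, hs₁⟩ ⟨hc₂, hi₂, hs₂⟩ x hx ↦ ?_⟩
  · obtain ⟨B, hB⟩ := M.exists_isBase
    refine ⟨(∅ : Finset Q).disjSum B.toFinite.toFinset, ?_, ?_, ?_⟩ <;>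
      simp only [Finset.card_disjSum, Finset.toRight_disjSum, Set.Finite.coe_toFinset]
    · rw [← hr B hB, Set.ncard_eq_toFinset_card B B.toFinite, Finset.card_empty, zero_add]
    · exact hB.indep
    · exact hNM.spanning hB.spanning
  obtain ⟨hx₁, hx₂⟩ := Finset.mem_sdiff.1 hx
  obtain ⟨y, hy, hyi, hys⟩ :=
    hNM.exists_insert_erase_indep_spanning hNE (hc₁.trans hc₂.symm) hi₁ hs₁ hi₂ hs₂ hx₁ hx₂
  refine ⟨y, hy, ?_, hyi, hys⟩
  rw [Finset.card_insert_of_notMem fun h ↦ (Finset.mem_sdiff.1 hy).2 (Finset.mem_of_mem_erase h),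
    Finset.card_erase_add_one hx₁, hc₁]

/-- Let `M` be a matroid of rank `r` on `F`, `N` a quotient of `M` (every flat of `N`
is a flat of `M`), and `Q` a finite set of size `r`. Then the sets `B̃ ⊆ Q ⊔ F` of size
`r` such that `B̃ ∩ F` is independent in `M` and spanning in `N` form the bases of a
matroid on `Q ⊔ F`. -/
theorem quotient_bases_matroid {F Q : Type*} [Fintype F] [Fintype Q]
    [DecidableEq F] [DecidableEq Q]
    (M N : Matroid F) (hME : M.E = Set.univ) (hNE : N.E = Set.univ)
    (hquot : ∀ X : Set F, N.IsFlat X → M.IsFlat X)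
    (r : ℕ) (hr : ∀ B, M.IsBase B → B.ncard = r)
    (hQ : Fintype.card Q = r) :
    IsBasisFamily (fun B : Finset (Q ⊕ F) =>
      B.card = r ∧
      M.Indep {f : F | Sum.inr f ∈ B} ∧
      N.Spanning {f : F | Sum.inr f ∈ B}) :=
  quotient_bases_matroid_general M N hME hNE hquot r hr
end

section
/- Let M be a matroid of rank r on a finite set F and Q a finite set of size r disjoint from F. The basis generating polynomial of the matroid M̃ on Q ⊔ F whose bases are the sets S ⊔ T with S ⊆ Q, T ⊆ F independent in M, |S| + |T| = r, specializes under setting all variables indexed by Q equal to a single variable x and all variables indexed by F equal to y, to the polynomial q(x,y) = Σ_k C(r,k)·I_k(M)·x^{r−k}·y^k, where I_k(M) is the number of independent sets of M of size k. -/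
open scoped Classical

open Finset

theorem Matroid.isBasisFamily_indep_card_eq {α : Type*} [DecidableEq α] (N : Matroid α)
    (r : ℕ) (h : ∃ B : Finset α, N.Indep ↑B ∧ #B = r) :
    IsBasisFamily (fun B : Finset α => N.Indep ↑B ∧ #B = r) := by
  refine ⟨h, fun B₁ B₂ ⟨hB₁, hc₁⟩ ⟨hB₂, hc₂⟩ z hz => ?_⟩
  obtain ⟨hz₁, hz₂⟩ := mem_sdiff.1 hz
  have hcard : #(B₁.erase z) < #B₂ := by
    rw [card_erase_of_mem hz₁, hc₂, ← hc₁]; exact Nat.sub_one_lt (card_ne_zero_of_mem hz₁)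
  obtain ⟨y, hy₂, hy, hyI⟩ :=
    (hB₁.subset (coe_erase z B₁ ▸ Set.sdiff_subset)).augment_finset hB₂ hcard
  have hyz : y ≠ z := by rintro rfl; exact hz₂ hy₂
  refine ⟨y, mem_sdiff.2 ⟨hy₂, fun hy₁ => hy (mem_erase.2 ⟨hyz, hy₁⟩)⟩,
    by simpa using hyI, ?_⟩
  rw [card_insert_of_notMem hy, card_erase_of_mem hz₁]
  omega

section SumType

variable {Q F : Type*}

theorem Matroid.freeOn_sum_indep_iff (M : Matroid F) (B : Finset (Q ⊕ F)) :
    ((Matroid.freeOn (Set.univ : Set Q)).sum M).Indep ↑B ↔ M.Indep ↑B.toRight := by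
  rw [Matroid.sum_indep_iff, Matroid.freeOn_indep_iff, and_iff_right (Set.subset_univ _)]
  congr! 1
  ext; simp

theorem Finset.image_inl_union_image_inr_s18 [DecidableEq Q] [DecidableEq F]
    (S : Finset Q) (T : Finset F) :
    S.image Sum.inl ∪ T.image Sum.inr = S.disjSum T := by
  ext x; cases x <;> simp

theorem Finset.filter_isLeft_eq_map_toLeft (B : Finset (Q ⊕ F)) :
    B.filter (fun g => g.isLeft = true) = B.toLeft.map .inl := by
  ext x; cases x <;> simp

theorem Finset.filter_isRight_eq_map_toRight (B : Finset (Q ⊕ F)) :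
    B.filter (fun g => g.isRight = true) = B.toRight.map .inr := by
  ext x; cases x <;> simp

theorem Finset.exists_eq_image_inl_union_image_inr_iff [DecidableEq Q] [DecidableEq F]
    (p : Finset Q → Finset F → Prop) (B : Finset (Q ⊕ F)) :
    (∃ S T, p S T ∧ B = S.image Sum.inl ∪ T.image Sum.inr) ↔ p B.toLeft B.toRight := by
  simp_rw [image_inl_union_image_inr_s18, eq_disjSum_iff]
  exact ⟨fun ⟨_, _, h, hS, hT⟩ => hS ▸ hT ▸ h, fun h => ⟨_, _, h, rfl, rfl⟩⟩

theorem Matroid.sum_indep_card_add_eq_sum_choose_mul [Fintype Q] [Fintype F]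
    {R : Type*} [CommSemiring R] (M : Matroid F) (r : ℕ) (hQ : Fintype.card Q = r)
    (f : ℕ → ℕ → R) :
    ∑ p : Finset Q × Finset F with M.Indep ↑p.2 ∧ #p.1 + #p.2 = r, f #p.1 #p.2 =
      ∑ k ∈ range (r + 1),
        (r.choose k * Nat.card {T : Finset F // M.Indep ↑T ∧ #T = k}) * f (r - k) k := by
  rw [← sum_fiberwise_of_maps_to (t := range (r + 1)) (g := fun p => #p.2)
    (fun p hp => by simp only [mem_filter] at hp; simp only [mem_range]; omega)]
  refine sum_congr rfl fun k hk => ?_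
  have hkr : k ≤ r := Nat.lt_succ_iff.1 (mem_range.1 hk)
  have hfiber :
      {p ∈ ({p : Finset Q × Finset F | M.Indep ↑p.2 ∧ #p.1 + #p.2 = r} : Finset _) |
          #p.2 = k} =
        powersetCard (r - k) univ ×ˢ ({T | M.Indep ↑T ∧ #T = k} : Finset (Finset F)) := by
    ext ⟨S, T⟩
    simp only [mem_filter, mem_univ, true_and, mem_product, mem_powersetCard, subset_univ]
    constructor
    · rintro ⟨⟨hT, hc⟩, rfl⟩
      exact ⟨by omega, hT, rfl⟩
    · rintro ⟨hS, hT, rfl⟩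
      exact ⟨⟨hT, by omega⟩, rfl⟩
  rw [sum_congr hfiber fun p hp => by
    simp only [mem_product, mem_powersetCard, mem_filter] at hp; rw [hp.1.2, hp.2.2.2]]
  rw [sum_const, card_product, card_powersetCard, card_univ, hQ, Nat.choose_symm hkr,
    Nat.card_eq_fintype_card, Fintype.card_subtype, nsmul_eq_mul]
  push_cast
  rfl

end SumType

theorem basis_generating_specialization_general {F Q : Type*} [Fintype F] [Fintype Q]
    [DecidableEq F] [DecidableEq Q]
    (M : Matroid F)
    (r : ℕ)
    (hQ : Fintype.card Q = r) :
    IsBasisFamily (fun B : Finset (Q ⊕ F) =>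
      ∃ (S : Finset Q) (T : Finset F), M.Indep ↑T ∧ S.card + T.card = r ∧
        B = S.image Sum.inl ∪ T.image Sum.inr) ∧
    ∀ x y : ℝ,
      (∑ B : Finset (Q ⊕ F),
        if ∃ (S : Finset Q) (T : Finset F), M.Indep ↑T ∧ S.card + T.card = r ∧
            B = S.image Sum.inl ∪ T.image Sum.inr then
          x ^ (B.filter (fun g : Q ⊕ F => g.isLeft = true)).card * y ^ (B.filter (fun g : Q ⊕ F => g.isRight = true)).card
        else 0) =
      ∑ k ∈ Finset.range (r + 1),
        ((r.choose k : ℝ) *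
          (Nat.card {T : Finset F // M.Indep ↑T ∧ T.card = k} : ℝ)) *
            x ^ (r - k) * y ^ k := by
  simp only [← and_assoc, exists_eq_image_inl_union_image_inr_iff]
  refine ⟨?_, fun x y => ?_⟩
  · simp only [card_toLeft_add_card_toRight, ← Matroid.freeOn_sum_indep_iff]
    refine (Matroid.freeOn (Set.univ : Set Q)).sum M |>.isBasisFamily_indep_card_eq r
      ⟨univ.map .inl, ?_, ?_⟩ <;> simp [hQ]
  · rw [← sum_filter]
    calc _ = ∑ p : Finset Q × Finset F with M.Indep ↑p.2 ∧ #p.1 + #p.2 = r,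
            x ^ #p.1 * y ^ #p.2 :=
          sum_equiv sumEquiv.toEquiv (by simp) fun B _ => by
            simp [filter_isLeft_eq_map_toLeft, filter_isRight_eq_map_toRight]
      _ = _ := by
          rw [Matroid.sum_indep_card_add_eq_sum_choose_mul M r hQ fun a b => x ^ a * y ^ b]
          simp only [mul_assoc]

/-- Let `M` be a matroid of rank `r` on `F` and `Q` an `r`-element set. The family of
sets `S ⊔ T` with `S ⊆ Q`, `T ⊆ F` independent in `M`, `|S| + |T| = r` is the family
of bases of a matroid on `Q ⊔ F`, and its basis generating polynomial specializes
(setting all `Q`-variables to `x` and all `F`-variables to `y`) to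
`Σ_k C(r, k) · I_k(M) · x^(r-k) · y^k`. -/
theorem basis_generating_specialization {F Q : Type*} [Fintype F] [Fintype Q]
    [DecidableEq F] [DecidableEq Q]
    (M : Matroid F) (hME : M.E = Set.univ)
    (r : ℕ) (hr : ∀ B, M.IsBase B → B.ncard = r)
    (hQ : Fintype.card Q = r) :
    IsBasisFamily (fun B : Finset (Q ⊕ F) =>
      ∃ (S : Finset Q) (T : Finset F), M.Indep ↑T ∧ S.card + T.card = r ∧
        B = S.image Sum.inl ∪ T.image Sum.inr) ∧
    ∀ x y : ℝ,
      (∑ B : Finset (Q ⊕ F),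
        if ∃ (S : Finset Q) (T : Finset F), M.Indep ↑T ∧ S.card + T.card = r ∧
            B = S.image Sum.inl ∪ T.image Sum.inr then
          x ^ (B.filter (fun g : Q ⊕ F => g.isLeft = true)).card * y ^ (B.filter (fun g : Q ⊕ F => g.isRight = true)).card
        else 0) =
      ∑ k ∈ Finset.range (r + 1),
        ((r.choose k : ℝ) *
          (Nat.card {T : Finset F // M.Indep ↑T ∧ T.card = k} : ℝ)) *
            x ^ (r - k) * y ^ k :=
  basis_generating_specialization_general M r hQ
end

section
/- Let A be a bimatroid on E × F realized by a matrix over an algebraically closed field, i.e., the regular minors of A are the pairs (I,J) with det A[I,J] ≠ 0 for some matrix A ∈ K^{E×F}. Then the homogeneous regular minor polynomial p(w) = Σ_{(I,J) regular minor} Π_{e ∈ E\I} w_e · Π_{f ∈ J} w_f (in variables indexed by E ⊔ F) equals 1/(|E|!) times the volume polynomial vol_H(w) = (Σ_{g ∈ E⊔F} w_g H_g)^{|E|} of the matroid Schubert variety X of the extended matroid Â on E ⊔ F, where H_g are the coordinate hyperplane classes on (P¹)^{E⊔F} restricted to X. -/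
open scoped Classical

/-- `(I, J)` is a regular minor of the matrix `A` if the square submatrix `A[I, J]`
has nonzero determinant. -/
def Matrix.IsRegMinor' {E F K : Type*} [Field K] (A : Matrix E F K)
    (I : Finset E) (J : Finset F) : Prop :=
  ∃ e : {x // x ∈ I} ≃ {y // y ∈ J},
    (A.submatrix (fun i : {x // x ∈ I} => (i : E)) (fun i : {x // x ∈ I} => (e i : F))).det ≠ 0

/-- `S ⊆ E ⊔ F` is a basis of the extended matroid of the matrix `A` (realized by
`[I_E | A]`) iff `S = (E \ I) ∪ J` for some regular minor `(I, J)` of `A`. -/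
def isExtBasis {E F K : Type*} [Fintype E] [Fintype F] [DecidableEq E] [DecidableEq F]
    [Field K] (A : Matrix E F K) (S : Finset (E ⊕ F)) : Prop :=
  ∃ I J, A.IsRegMinor' I J ∧ S = Iᶜ.image Sum.inl ∪ J.image Sum.inr

section Aux

set_option linter.unusedSectionVars false

variable {E F K : Type*} [Fintype E] [Fintype F] [DecidableEq E] [DecidableEq F] [Field K]

lemma regMinor_card {A : Matrix E F K} {I : Finset E} {J : Finset F}
    (h : A.IsRegMinor' I J) : I.card = J.card := by
  obtain ⟨e, -⟩ := h
  simpa using Fintype.card_congr e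

lemma extBasis_card {A : Matrix E F K} {S : Finset (E ⊕ F)}
    (h : isExtBasis A S) : S.card = Fintype.card E := by
  obtain ⟨I, J, hIJ, rfl⟩ := h
  rw [Finset.card_union_of_disjoint, Finset.card_image_of_injective _ Sum.inl_injective,
    Finset.card_image_of_injective _ Sum.inr_injective, Finset.card_compl,
    ← regMinor_card hIJ]
  · have := I.card_le_univ
    omega
  · simp [Finset.disjoint_left]

lemma toS_bij {d : ℕ} {S : Finset (E ⊕ F)} (hcard : S.card = d) (t : Fin d → E ⊕ F)
    (ht : Finset.univ.image t = S) :
    Function.Bijective (fun k : Fin d =>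
      (⟨t k, ht ▸ Finset.mem_image_of_mem t (Finset.mem_univ k)⟩ : {x // x ∈ S})) := by
  have hinj : Function.Injective t := by
    have : (Finset.univ.image t).card = (Finset.univ : Finset (Fin d)).card := by
      simp [ht, hcard]
    have := Finset.card_image_iff.mp this
    intro a b hab
    exact this (Finset.mem_coe.mpr (Finset.mem_univ a)) (Finset.mem_coe.mpr (Finset.mem_univ b)) hab
  rw [Fintype.bijective_iff_injective_and_card]
  constructor
  · intro a b hab
    exact hinj (congrArg Subtype.val hab)
  · simp [hcard]

lemma fiber_sum {d : ℕ} (S : Finset (E ⊕ F)) (hcard : S.card = d) (w : E ⊕ F → ℝ) :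
    ∑ t ∈ Finset.univ.filter (fun t : Fin d → E ⊕ F => Finset.univ.image t = S),
      ∏ i, w (t i) = (d.factorial : ℝ) * ∏ g ∈ S, w g := by
  have hcS : Fintype.card {x // x ∈ S} = d := by simp [hcard]
  obtain ⟨e⟩ : Nonempty (Fin d ≃ {x // x ∈ S}) :=
    ⟨Fintype.equivOfCardEq (by simp [hcS])⟩
  have := Finset.sum_bij'
    (s := Finset.univ.filter (fun t : Fin d → E ⊕ F => Finset.univ.image t = S))
    (t := (Finset.univ : Finset (Equiv.Perm (Fin d))))
    (f := fun t => ∏ i, w (t i))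
    (g := fun σ => ∏ i, w (e (σ i)))
    (i := fun t ht => (Equiv.ofBijective _
      (toS_bij hcard t (by simpa using ht))).trans e.symm)
    (j := fun σ _ => fun k => (e (σ k) : E ⊕ F))
    ?_ ?_ ?_ ?_ ?_
  · rw [this]
    have h1 : ∀ σ : Equiv.Perm (Fin d), (∏ i, w (e (σ i))) = ∏ g ∈ S, w g := by
      intro σ
      rw [← Finset.prod_attach S (fun g => w g)]
      exact Equiv.prod_comp (σ.trans e) (fun x => w x)
    simp only [h1, Finset.sum_const, Finset.card_univ, Fintype.card_perm, Fintype.card_fin,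
      nsmul_eq_mul]
  · intro a ha
    exact Finset.mem_univ _
  · intro σ _
    simp only [Finset.mem_filter, Finset.mem_univ, true_and]
    ext g
    simp only [Finset.mem_image, Finset.mem_univ, true_and]
    constructor
    · rintro ⟨k, rfl⟩; exact (e (σ k)).2
    · intro hg
      exact ⟨σ.symm (e.symm ⟨g, hg⟩), by simp⟩
  · intro t ht
    funext k
    simp [Equiv.ofBijective]
  · intro σ _
    ext k
    simp [Equiv.ofBijective, Function.surjInv_eq]
  · intro t ht
    apply Finset.prod_congr rfl
    intro k _
    simp [Equiv.ofBijective]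

lemma recoverI (I : Finset E) (J : Finset F) :
    (Finset.univ.filter fun e => Sum.inl e ∈ Iᶜ.image Sum.inl ∪ J.image Sum.inr)ᶜ = I := by
  ext x; simp

lemma recoverJ (I : Finset E) (J : Finset F) :
    (Finset.univ.filter fun f => Sum.inr f ∈ Iᶜ.image Sum.inl ∪ J.image Sum.inr) = J := by
  ext x; simp

end Aux

/-- For a bimatroid realized by a matrix `A` over an algebraically closed field, the
homogeneous regular minor polynomial equals `1/|E|!` times the volume polynomial of the
matroid Schubert variety of the extended matroid `Â`. Here `inter t` encodes the
intersection number `H_{t 0} ⋯ H_{t (d-1)}` of the nef coordinate hyperplane classes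
on the Schubert variety, which by Ardila–Boocher equals `1` if the underlying set
`{t 0, …, t (d-1)}` is a basis of `Â` and `0` otherwise; the volume polynomial is
`(Σ_g w_g H_g)^d` expanded via these intersection numbers. -/
theorem regular_minor_polynomial_is_volume {E F K : Type*} [Fintype E] [Fintype F]
    [DecidableEq E] [DecidableEq F] [Field K] [IsAlgClosed K]
    (A : Matrix E F K)
    (inter : (Fin (Fintype.card E) → E ⊕ F) → ℕ)
    (hsymm : ∀ (t : Fin (Fintype.card E) → E ⊕ F) (σ : Equiv.Perm (Fin (Fintype.card E))),
      inter (t ∘ σ) = inter t)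
    (hAB : ∀ t : Fin (Fintype.card E) → E ⊕ F,
      inter t = if isExtBasis A (Finset.univ.image t) then 1 else 0) :
    ∀ w : E ⊕ F → ℝ,
      ((Fintype.card E).factorial : ℝ) *
        (∑ p ∈ Finset.univ.filter
            (fun p : Finset E × Finset F => A.IsRegMinor' p.1 p.2),
          (∏ e ∈ p.1ᶜ, w (Sum.inl e)) * ∏ f ∈ p.2, w (Sum.inr f)) =
      ∑ t : Fin (Fintype.card E) → E ⊕ F, (∏ i, w (t i)) * (inter t : ℝ) := by
  intro w
  -- Rewrite RHS via the basis indicator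
  have step1 : (∑ t : Fin (Fintype.card E) → E ⊕ F, (∏ i, w (t i)) * (inter t : ℝ)) =
      ∑ t : Fin (Fintype.card E) → E ⊕ F,
        (if isExtBasis A (Finset.univ.image t) then ∏ i, w (t i) else 0) := by
    apply Finset.sum_congr rfl
    intro t _
    rw [hAB]
    split <;> simp
  rw [step1, ← Finset.sum_fiberwise Finset.univ
    (fun t : Fin (Fintype.card E) → E ⊕ F => Finset.univ.image t)
    (fun t => if isExtBasis A (Finset.univ.image t) then ∏ i, w (t i) else 0)]
  have step2 : ∀ S : Finset (E ⊕ F),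
      (∑ t ∈ Finset.univ.filter (fun t : Fin (Fintype.card E) → E ⊕ F => Finset.univ.image t = S),
        (if isExtBasis A (Finset.univ.image t) then ∏ i, w (t i) else 0)) =
      if isExtBasis A S then ((Fintype.card E).factorial : ℝ) * ∏ g ∈ S, w g else 0 := by
    intro S
    by_cases hS : isExtBasis A S
    · rw [if_pos hS, ← fiber_sum S (extBasis_card hS) w]
      apply Finset.sum_congr rfl
      intro t ht
      have : Finset.univ.image t = S := (Finset.mem_filter.mp ht).2
      rw [this, if_pos hS]
    · rw [if_neg hS]
      apply Finset.sum_eq_zero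
      intro t ht
      have : Finset.univ.image t = S := (Finset.mem_filter.mp ht).2
      rw [this, if_neg hS]
  simp only [step2]
  rw [← Finset.sum_filter]
  -- Now transform the LHS via the bijection (I, J) ↦ (E \ I) ∪ J
  rw [Finset.mul_sum]
  refine Finset.sum_nbij'
    (i := fun p : Finset E × Finset F => p.1ᶜ.image Sum.inl ∪ p.2.image Sum.inr)
    (j := fun S => ((Finset.univ.filter fun e => Sum.inl e ∈ S)ᶜ,
      Finset.univ.filter fun f => Sum.inr f ∈ S))
    ?_ ?_ ?_ ?_ ?_
  · intro p hp
    simp only [Finset.mem_filter, Finset.mem_univ, true_and] at hp ⊢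
    exact ⟨p.1, p.2, hp, rfl⟩
  · intro S hS
    simp only [Finset.mem_filter, Finset.mem_univ, true_and] at hS ⊢
    obtain ⟨I, J, hIJ, rfl⟩ := hS
    rw [recoverI, recoverJ]
    exact hIJ
  · intro p hp
    obtain ⟨I, J⟩ := p
    rw [Prod.mk.injEq]
    exact ⟨recoverI I J, recoverJ I J⟩
  · intro S hS
    simp only [Finset.mem_filter, Finset.mem_univ, true_and] at hS
    obtain ⟨I, J, hIJ, rfl⟩ := hS
    simp only
    rw [recoverI, recoverJ]
  · intro p hp
    rw [Finset.prod_union (by simp [Finset.disjoint_left]),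
      Finset.prod_image (fun x _ y _ h => Sum.inl_injective h),
      Finset.prod_image (fun x _ y _ h => Sum.inr_injective h)]
end
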